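/- arXiv:2411.04447 — 5 statements merged into one kernel-verified Lean document; each statement's English description precedes it below -/
import Mathlib

section
/- Let p be an odd prime, m ≥ 2 an integer, and let s be an integer with 0 ≤ s ≤ m such that m+s ≥ 3. Let f : F_q → F_p be a weakly regular s-plateaued function with f(0) = 0. Then the linear code C̄_f is self-orthogonal, that is, C̄_f ⊆ C̄_f^⊥. -/
open Finset

noncomputable section

/-- ζ_p = exp(2πi/p). -/
def zetaP (p : ℕ) : ℂ := Complex.exp (2 * Real.pi * Complex.I / p)

/-- ζ_p^a for a ∈ F_p. -/
def eChar (p : ℕ) (a : ZMod p) : ℂ := zetaP p ^ a.val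

/-- Walsh transform of f : F_q → F_p : W_f(β) = Σ_x ζ_p^{f(x) − Tr(βx)}. -/
def walsh (p : ℕ) (F : Type) [Field F] [Fintype F] [Algebra (ZMod p) F]
    (f : F → ZMod p) (β : F) : ℂ :=
  ∑ x : F, eChar p (f x - Algebra.trace (ZMod p) F (β * x))

/-- √p* = √p if p ≡ 1 (mod 4), and i√p if p ≡ 3 (mod 4). -/
def sqrtPStar (p : ℕ) : ℂ :=
  if p % 4 = 1 then ((Real.sqrt p : ℝ) : ℂ) else Complex.I * ((Real.sqrt p : ℝ) : ℂ)

/-- f is s-plateaued: |W_f(β)|² ∈ {0, p^{m+s}} for all β. -/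
def IsPlateaued (p m s : ℕ) (F : Type) [Field F] [Fintype F] [Algebra (ZMod p) F]
    (f : F → ZMod p) : Prop :=
  ∀ β : F, Complex.normSq (walsh p F f β) = 0 ∨
    Complex.normSq (walsh p F f β) = (p : ℝ) ^ (m + s)

/-- Walsh support S_f = {β : |W_f(β)|² = p^{m+s}}. -/
def walshSupp (p m s : ℕ) (F : Type) [Field F] [Fintype F] [Algebra (ZMod p) F]
    (f : F → ZMod p) : Set F :=
  {β : F | Complex.normSq (walsh p F f β) = (p : ℝ) ^ (m + s)}

/-- f is weakly regular s-plateaued with sign ε and dual function f^*. -/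
def IsWeaklyRegularPlateaued (p m s : ℕ) (F : Type) [Field F] [Fintype F]
    [Algebra (ZMod p) F] (f : F → ZMod p) (ε : ℤ) (fstar : F → ZMod p) : Prop :=
  IsPlateaued p m s F f ∧ (ε = 1 ∨ ε = -1) ∧
  (∀ β : F, β ∉ walshSupp p m s F f → fstar β = 0) ∧
  (∀ β ∈ walshSupp p m s F f,
    walsh p F f β = (ε : ℂ) * sqrtPStar p ^ (m + s) * eChar p (fstar β))

/-- Walsh transform of a Boolean function, with values in ℤ. -/
def walsh2 (F : Type) [Field F] [Fintype F] [Algebra (ZMod 2) F]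
    (f : F → ZMod 2) (β : F) : ℤ :=
  ∑ x : F, (-1 : ℤ) ^ ((f x + Algebra.trace (ZMod 2) F (β * x)).val)

/-- A Boolean function is s-plateaued: W_f(β)² ∈ {0, 2^{m+s}} for all β. -/
def IsPlateaued2 (m s : ℕ) (F : Type) [Field F] [Fintype F] [Algebra (ZMod 2) F]
    (f : F → ZMod 2) : Prop :=
  ∀ β : F, walsh2 F f β ^ 2 = 0 ∨ walsh2 F f β ^ 2 = 2 ^ (m + s)

/-- Hamming weight. -/
def wtH {n : Type} [Fintype n] {K : Type} [Zero K] [DecidableEq K] (v : n → K) : ℕ :=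
  (Finset.univ.filter (fun i => v i ≠ 0)).card

/-- A code S has minimum distance d. -/
def hasMinDist {n : Type} [Fintype n] {K : Type} [Zero K] [DecidableEq K]
    (S : Set (n → K)) (d : ℕ) : Prop :=
  (∃ v ∈ S, v ≠ 0 ∧ wtH v = d) ∧ ∀ v ∈ S, v ≠ 0 → d ≤ wtH v

/-- The dual code of a set of vectors. -/
def dualCode {n : Type} [Fintype n] {K : Type} [Field K] (S : Set (n → K)) :
    Submodule K (n → K) where
  carrier := {u : n → K | ∀ v ∈ S, ∑ i, u i * v i = 0}
  add_mem' := by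
    intro u w hu hw v hv
    have h1 := hu v hv
    have h2 := hw v hv
    simp only [Pi.add_apply, add_mul, Finset.sum_add_distrib, h1, h2, add_zero]
  zero_mem' := by
    intro v hv
    simp
  smul_mem' := by
    intro c u hu v hv
    have h1 := hu v hv
    simp only [Pi.smul_apply, smul_eq_mul, mul_assoc, ← Finset.mul_sum, h1, mul_zero]

/-- The code C̄_f = {(a f(x) + Tr(bx) + c)_{x ∈ F_q}}. -/
def codeCbar (p : ℕ) (F : Type) [Field F] [Fintype F] [Algebra (ZMod p) F]
    (f : F → ZMod p) : Set (F → ZMod p) :=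
  {v : F → ZMod p | ∃ a c : ZMod p, ∃ b : F,
    v = fun x => a * f x + Algebra.trace (ZMod p) F (b * x) + c}

/-- The extended code C̄_f' ⊆ F_p^{m+2+q}: all vectors
(c, a, a_0, …, a_{m−1}, (a f(x) + Tr(bx) + a + c)_{x ∈ F_q}) with b = Σ a_i α^i. -/
def extCode (p m : ℕ) (F : Type) [Field F] [Fintype F] [Algebra (ZMod p) F]
    (f : F → ZMod p) (α : F) : Set (Fin (m + 2) ⊕ F → ZMod p) :=
  {v | ∃ c a : ZMod p, ∃ aa : Fin m → ZMod p,
    v = Sum.elim (Fin.cons c (Fin.cons a aa))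
      (fun x => a * f x +
        Algebra.trace (ZMod p) F ((∑ i : Fin m, aa i • α ^ (i : ℕ)) * x) + a + c)}

/-- The punctured code C_f^* indexed by the nonzero elements of F_q. -/
def codeCstar (p : ℕ) (F : Type) [Field F] [Fintype F] [Algebra (ZMod p) F]
    (f : F → ZMod p) : Set ({x : F // x ≠ 0} → ZMod p) :=
  {v | ∃ a : ZMod p, ∃ b : F,
    v = fun x => a * f x.val + Algebra.trace (ZMod p) F (b * x.val)}

end

/-!
Every codeword `v = a f + Tr(b ·) + c` satisfies `∑ₓ v(x)² = 0`; as `p` is odd and the code is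
closed under addition, polarization turns this into `∑ₓ u(x) v(x) = 0`. For `∑ₓ v(x)² = 0` it is
enough that each value of `G` is taken a multiple of `p` times, where `v = a G + c` with
`G = f - Tr(β ·)`, `β = -b/a`, if `a ≠ 0`, and `G = Tr(b ·)` if `a = 0`. The character sum
`∑ₓ ζ_p ^ G(x)` is then a Walsh coefficient, resp. `0` or `q`; since `(√p*)² = ±p`, `√p*` is `±` the
quadratic Gauss sum and `m + s ≥ 3`, it lies in `p (1 - ζ_p) ℤ[ζ_p]`. The cyclotomic polynomial
being the minimal polynomial of `ζ_p`, the only integer relations among `1, ζ_p, …, ζ_p ^ (p-1)`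
are multiples of the all-ones one, so comparing with `∑ⱼ #G⁻¹(j) ζ_p ^ j` and using `p² ∣ q`
gives `p ∣ #G⁻¹(j)`.
-/

section Characters

variable (p : ℕ) [NeZero p]

theorem zetaP_isPrimitiveRoot : IsPrimitiveRoot (zetaP p) p :=
  Complex.isPrimitiveRoot_exp p (NeZero.ne p)

noncomputable def eCharAddChar : AddChar (ZMod p) ℂ :=
  AddChar.zmodChar p (zetaP_isPrimitiveRoot p).pow_eq_one

theorem eChar_add (a b : ZMod p) : eChar p (a + b) = eChar p a * eChar p b :=
  AddChar.map_add_eq_mul (eCharAddChar p) a b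

end Characters

open Polynomial in
theorem eq_of_sum_intCast_mul_eChar_eq_zero (p : ℕ) [Fact p.Prime] (d : ZMod p → ℤ)
    (h : ∑ j, (d j : ℂ) * eChar p j = 0) (j k : ZMod p) : d j = d k := by
  have hp : p.Prime := Fact.out
  set P : ℤ[X] := ∑ i : ZMod p, C (d i) * X ^ i.val
  have hcoeff (i : ZMod p) : P.coeff i.val = d i := by
    simp [P, finsetSum_coeff, (ZMod.val_injective p).eq_iff]
  have hdvd : cyclotomic p ℤ ∣ P := by
    rw [cyclotomic_eq_minpoly (zetaP_isPrimitiveRoot p) hp.pos]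
    exact minpoly.isIntegrallyClosed_dvd ((zetaP_isPrimitiveRoot p).isIntegral hp.pos)
      (by simpa [P, eChar] using h)
  have hdeg : P.natDegree ≤ (cyclotomic p ℤ).natDegree := by
    rw [natDegree_cyclotomic, Nat.totient_prime hp]
    refine natDegree_sum_le_of_forall_le _ _ fun i _ => (natDegree_C_mul_X_pow_le _ _).trans ?_
    have := ZMod.val_lt i
    omega
  obtain ⟨c, hc⟩ : ∃ c, P = C c * cyclotomic p ℤ :=
    ⟨_, eq_leadingCoeff_mul_of_monic_of_dvd_of_natDegree_le (cyclotomic.monic p ℤ) hdvd hdeg⟩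
  have hconst (i : ZMod p) : d i = c := by
    rw [← hcoeff, hc, coeff_C_mul, cyclotomic_prime, finsetSum_coeff]
    simp [coeff_X_pow, ZMod.val_lt]
  rw [hconst j, hconst k]

/-- `z ∈ p (1 - ζ_p) ℤ[ζ_p]`: an element `∑ c_j ζ_p^j` of `ℤ[ζ_p]` lies in `(1 - ζ_p)` exactly when
`p ∣ ∑ c_j`. -/
def IsPDivisibleCharSum (p : ℕ) [NeZero p] (z : ℂ) : Prop :=
  ∃ c : ZMod p → ℤ, (p : ℤ) ∣ ∑ j, c j ∧ z = p * ∑ j, (c j : ℂ) * eChar p j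

section PDivisible

variable {p : ℕ} [NeZero p]

namespace IsPDivisibleCharSum

theorem zero : IsPDivisibleCharSum p 0 := ⟨0, by simp, by simp⟩

theorem intCast_mul {z : ℂ} (hz : IsPDivisibleCharSum p z) (n : ℤ) :
    IsPDivisibleCharSum p (n * z) := by
  obtain ⟨c, hc, rfl⟩ := hz
  refine ⟨n • c, ?_, ?_⟩
  · simpa [Finset.mul_sum] using hc.mul_left n
  · simp only [Pi.smul_apply, smul_eq_mul, Int.cast_mul, Finset.mul_sum]
    exact Finset.sum_congr rfl fun _ _ => by ring

theorem eChar_mul {z : ℂ} (hz : IsPDivisibleCharSum p z) (j₀ : ZMod p) :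
    IsPDivisibleCharSum p (eChar p j₀ * z) := by
  obtain ⟨c, hc, rfl⟩ := hz
  refine ⟨fun j => c (j - j₀), ?_, ?_⟩
  · rwa [Fintype.sum_equiv (Equiv.subRight j₀) (fun j => c (j - j₀)) c fun _ => rfl]
  · have hshift : ∑ j, (c (j - j₀) : ℂ) * eChar p j = ∑ i, (c i : ℂ) * eChar p (i + j₀) :=
      (Fintype.sum_equiv (Equiv.addRight j₀) _ _ fun i => by simp).symm
    simp only [hshift, eChar_add, Finset.mul_sum]
    exact Finset.sum_congr rfl fun _ _ => by ring

end IsPDivisibleCharSum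

theorem isPDivisibleCharSum_natCast {n : ℕ} (hn : p ^ 2 ∣ n) : IsPDivisibleCharSum p n := by
  obtain ⟨t, rfl⟩ := hn
  refine ⟨Pi.single 0 (p * t : ℤ), by simp, ?_⟩
  rw [Fintype.sum_eq_single 0 fun j hj => by simp [hj]]
  simp [eChar]
  ring

theorem isPDivisibleCharSum_sum_addChar {A : Type*} [AddGroup A] [Fintype A]
    (hA : p ^ 2 ∣ Fintype.card A) (ψ : AddChar A ℂ) : IsPDivisibleCharSum p (∑ a, ψ a) := by
  classical
  rw [AddChar.sum_eq_ite]
  split_ifs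
  exacts [isPDivisibleCharSum_natCast hA, .zero]

theorem isPDivisibleCharSum_sum_eChar_trace {F : Type} [Field F] [Fintype F]
    [Algebra (ZMod p) F] (hF : p ^ 2 ∣ Fintype.card F) (b : F) :
    IsPDivisibleCharSum p (∑ x : F, eChar p (Algebra.trace (ZMod p) F (b * x))) :=
  isPDivisibleCharSum_sum_addChar hF <| (eCharAddChar p).compAddMonoidHom
    ((Algebra.trace (ZMod p) F).toAddMonoidHom.comp (AddMonoidHom.mulLeft b))

end PDivisible

section GaussSum

variable {p : ℕ} [Fact p.Prime]

theorem sqrtPStar_sq (hp2 : p ≠ 2) : sqrtPStar p ^ 2 = ZMod.χ₄ p * p := by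
  have hsqrt : ((Real.sqrt p : ℝ) : ℂ) ^ 2 = p := by
    rw [← Complex.ofReal_pow, Real.sq_sqrt p.cast_nonneg, Complex.ofReal_natCast]
  have hodd : p % 2 = 1 := (Fact.out : p.Prime).eq_two_or_odd.resolve_left hp2
  rcases (by omega : p % 4 = 1 ∨ p % 4 = 3) with h | h
  · simp [sqrtPStar, h, hsqrt, ZMod.χ₄_nat_one_mod_four h]
  · simp [sqrtPStar, h, hsqrt, ZMod.χ₄_nat_three_mod_four h, mul_pow]

theorem sum_quadraticChar_mul_eChar_sq (hp2 : p ≠ 2) :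
    (∑ a : ZMod p, (quadraticChar (ZMod p) a : ℂ) * eChar p a) ^ 2 = ZMod.χ₄ p * p := by
  have hchar : ringChar (ZMod p) ≠ 2 := by rwa [ZMod.ringChar_zmod_n]
  set χ : MulChar (ZMod p) ℂ := (quadraticChar (ZMod p)).ringHomComp (Int.castRingHom ℂ)
  have hχ : χ ≠ 1 := (MulChar.ringHomComp_ne_one_iff (RingHom.injective_int _)).mpr
    (quadraticChar_ne_one hchar)
  have hsq := gaussSum_sq hχ ((quadraticChar_isQuadratic (ZMod p)).comp _)
    (AddChar.zmodChar_primitive_of_primitive_root p (zetaP_isPrimitiveRoot p))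
  simp only [χ, MulChar.ringHomComp_apply, quadraticChar_neg_one hchar, ZMod.card] at hsq
  exact hsq

theorem sqrtPStar_eq_or_eq_neg (hp2 : p ≠ 2) :
    sqrtPStar p = ∑ a : ZMod p, (quadraticChar (ZMod p) a : ℂ) * eChar p a ∨
      sqrtPStar p = -∑ a : ZMod p, (quadraticChar (ZMod p) a : ℂ) * eChar p a :=
  sq_eq_sq_iff_eq_or_eq_neg.mp <| by
    rw [sqrtPStar_sq hp2, sum_quadraticChar_mul_eChar_sq hp2]

end GaussSum

section Walsh

variable {p : ℕ} [Fact p.Prime]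

theorem isPDivisibleCharSum_natCast_mul_sqrtPStar (hp2 : p ≠ 2) :
    IsPDivisibleCharSum p (p * sqrtPStar p) := by
  have hchar : ringChar (ZMod p) ≠ 2 := by rwa [ZMod.ringChar_zmod_n]
  have hgauss : IsPDivisibleCharSum p
      (p * ∑ a : ZMod p, (quadraticChar (ZMod p) a : ℂ) * eChar p a) :=
    ⟨fun a => quadraticChar (ZMod p) a,
      by rw [MulChar.sum_eq_zero_of_ne_one (quadraticChar_ne_one hchar)]; exact dvd_zero _, rfl⟩
  rcases sqrtPStar_eq_or_eq_neg hp2 with h | h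
  · rwa [h]
  · simpa [h] using hgauss.intCast_mul (-1)

theorem isPDivisibleCharSum_sqrtPStar_pow (hp2 : p ≠ 2) {n : ℕ} (hn : 3 ≤ n) :
    IsPDivisibleCharSum p (sqrtPStar p ^ n) := by
  obtain ⟨k, rfl | rfl⟩ := Nat.even_or_odd' n
  · obtain ⟨t, ht⟩ : (p : ℤ) ^ 2 ∣ (ZMod.χ₄ p * p) ^ k :=
      (pow_dvd_pow _ (by omega)).trans (pow_dvd_pow_of_dvd (dvd_mul_left _ _) k)
    have hpow : sqrtPStar p ^ (2 * k) = t * ((p ^ 2 : ℕ) : ℂ) := by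
      rw [pow_mul, sqrtPStar_sq hp2, mul_comm (t : ℂ)]
      exact_mod_cast ht
    rw [hpow]
    exact (isPDivisibleCharSum_natCast dvd_rfl).intCast_mul t
  · obtain ⟨t, ht⟩ : (p : ℤ) ∣ (ZMod.χ₄ p * p) ^ k :=
      (dvd_mul_left _ _).trans (dvd_pow_self _ (by omega))
    have hpow : sqrtPStar p ^ (2 * k + 1) = t * (p * sqrtPStar p) := by
      rw [pow_succ, pow_mul, sqrtPStar_sq hp2, ← mul_assoc]
      congr 1
      exact_mod_cast ht.trans (mul_comm _ _)
    rw [hpow]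
    exact (isPDivisibleCharSum_natCast_mul_sqrtPStar hp2).intCast_mul t

theorem isPDivisibleCharSum_walsh (hp2 : p ≠ 2) {m s : ℕ} (hms : 3 ≤ m + s)
    {F : Type} [Field F] [Fintype F] [Algebra (ZMod p) F] {f : F → ZMod p} {ε : ℤ}
    {fstar : F → ZMod p} (hwr : IsWeaklyRegularPlateaued p m s F f ε fstar) (β : F) :
    IsPDivisibleCharSum p (walsh p F f β) := by
  obtain ⟨hplat, -, -, hval⟩ := hwr
  rcases hplat β with h0 | hsupp
  · rw [Complex.normSq_eq_zero.mp h0]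
    exact .zero
  · rw [hval β hsupp, mul_comm]
    exact ((isPDivisibleCharSum_sqrtPStar_pow hp2 hms).intCast_mul ε).eChar_mul _

end Walsh

section Fibers

variable {p : ℕ} [Fact p.Prime] {X : Type*} [Fintype X]

theorem card_fiber_dvd_of_isPDivisibleCharSum (hX : p ^ 2 ∣ Fintype.card X) (G : X → ZMod p)
    (hG : IsPDivisibleCharSum p (∑ x, eChar p (G x))) (j : ZMod p) :
    p ∣ #{x | G x = j} := by
  obtain ⟨c, hc, hsum⟩ := hG
  set N : ZMod p → ℤ := fun j => #{x | G x = j}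
  have hfiber : ∑ x, eChar p (G x) = ∑ j, (N j : ℂ) * eChar p j := by
    rw [← Finset.sum_fiberwise' univ G (eChar p)]
    simp [N]
  have hconst := eq_of_sum_intCast_mul_eChar_eq_zero p (fun j => N j - p * c j) <| by
    simp only [Int.cast_sub, Int.cast_mul, Int.cast_natCast, sub_mul, Finset.sum_sub_distrib,
      ← hfiber, hsum, Finset.mul_sum, mul_assoc, sub_self]
  have hcardX : ∑ j, N j = Fintype.card X := by
    simp only [N]
    exact_mod_cast (Finset.card_eq_sum_card_fiberwise fun x _ => mem_univ (G x)).symm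
  obtain ⟨d, hd⟩ : ∃ d, ∀ j, N j - p * c j = d := ⟨_, fun j => hconst j 0⟩
  have hpd : (p : ℤ) * d = Fintype.card X - p * ∑ j, c j := by
    rw [← hcardX, Finset.mul_sum, ← Finset.sum_sub_distrib, Fintype.sum_congr _ _ hd,
      Finset.sum_const, card_univ, ZMod.card, nsmul_eq_mul]
  have hdvd : (p : ℤ) ∣ d := by
    have hp0 : (p : ℤ) ≠ 0 := by exact_mod_cast (Fact.out : p.Prime).ne_zero
    refine (mul_dvd_mul_iff_left hp0).mp ?_
    rw [hpd, ← sq]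
    exact dvd_sub (by exact_mod_cast hX) (by rw [sq]; exact mul_dvd_mul_left _ hc)
  have hN : N j = d + p * c j := by rw [← hd j]; ring
  have hpN : (p : ℤ) ∣ N j := hN ▸ dvd_add hdvd (dvd_mul_right _ _)
  exact Int.natCast_dvd_natCast.mp hpN

theorem sum_comp_eq_zero_of_isPDivisibleCharSum (hX : p ^ 2 ∣ Fintype.card X) (G : X → ZMod p)
    (hG : IsPDivisibleCharSum p (∑ x, eChar p (G x))) (h : ZMod p → ZMod p) :
    ∑ x, h (G x) = 0 := by
  rw [← Finset.sum_fiberwise' univ G h]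
  refine Finset.sum_eq_zero fun j _ => ?_
  rw [Finset.sum_const, nsmul_eq_mul,
    (ZMod.natCast_eq_zero_iff _ p).mpr (card_fiber_dvd_of_isPDivisibleCharSum hX G hG j), zero_mul]

end Fibers

section Code

variable {p : ℕ} [Fact p.Prime] {F : Type} [Field F] [Fintype F] [Algebra (ZMod p) F]
  {f : F → ZMod p}

theorem add_mem_codeCbar {u v : F → ZMod p} (hu : u ∈ codeCbar p F f) (hv : v ∈ codeCbar p F f) :
    u + v ∈ codeCbar p F f := by
  obtain ⟨a, c, b, rfl⟩ := hu
  obtain ⟨a', c', b', rfl⟩ := hv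
  refine ⟨a + a', c + c', b + b', funext fun x => ?_⟩
  simp only [Pi.add_apply, add_mul, map_add]
  ring

theorem sum_sq_eq_zero_of_mem_codeCbar (hp2 : p ≠ 2) {m s : ℕ} (hm : 2 ≤ m) (hms : 3 ≤ m + s)
    (hcard : Fintype.card F = p ^ m) {ε : ℤ} {fstar : F → ZMod p}
    (hwr : IsWeaklyRegularPlateaued p m s F f ε fstar) {v : F → ZMod p}
    (hv : v ∈ codeCbar p F f) : ∑ x, v x ^ 2 = 0 := by
  obtain ⟨a, c, b, rfl⟩ := hv
  have hF : p ^ 2 ∣ Fintype.card F := hcard ▸ pow_dvd_pow p hm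
  by_cases ha : a = 0
  · subst ha
    simpa using sum_comp_eq_zero_of_isPDivisibleCharSum hF _
      (isPDivisibleCharSum_sum_eChar_trace hF b) fun t => (t + c) ^ 2
  set β : F := -(algebraMap (ZMod p) F a)⁻¹ * b with hβ_def
  have htrace (x : F) :
      a * Algebra.trace (ZMod p) F (β * x) = -Algebra.trace (ZMod p) F (b * x) := by
    have hβ : a • (β * x) = -(b * x) := by
      have ha' : algebraMap (ZMod p) F a ≠ 0 := (map_ne_zero _).mpr ha
      rw [Algebra.smul_def, hβ_def]
      field_simp
    rw [← smul_eq_mul, ← map_smul, hβ, map_neg]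
  have hcomp (x : F) : a * f x + Algebra.trace (ZMod p) F (b * x) + c
      = a * (f x - Algebra.trace (ZMod p) F (β * x)) + c := by
    rw [mul_sub, htrace]
    ring
  simp only [hcomp]
  -- the character sum of `f - Tr(β ·)` is the Walsh coefficient `W_f(β)`
  exact sum_comp_eq_zero_of_isPDivisibleCharSum hF _ (isPDivisibleCharSum_walsh hp2 hms hwr β)
    fun t => (a * t + c) ^ 2

end Code

theorem subset_dualCode_of_sum_sq_eq_zero {n K : Type} [Fintype n] [Field K] (h2 : (2 : K) ≠ 0)
    {S : Set (n → K)} (hadd : ∀ u ∈ S, ∀ v ∈ S, u + v ∈ S) (hsq : ∀ v ∈ S, ∑ i, v i ^ 2 = 0) :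
    S ⊆ dualCode S := by
  intro u hu v hv
  have hpolar := hsq _ (hadd u hu v hv)
  simp only [Pi.add_apply, add_sq, Finset.sum_add_distrib, hsq u hu, hsq v hv, mul_assoc,
    ← Finset.mul_sum, zero_add, add_zero] at hpolar
  exact (mul_eq_zero.mp hpolar).resolve_left h2

theorem statement4_general (p m s : ℕ) [Fact p.Prime] (hp2 : p ≠ 2) (hm : 2 ≤ m)
    (hms : 3 ≤ m + s)
    (F : Type) [Field F] [Fintype F] [Algebra (ZMod p) F]
    (hcard : Fintype.card F = p ^ m)
    (f : F → ZMod p) (ε : ℤ) (fstar : F → ZMod p)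
    (hwr : IsWeaklyRegularPlateaued p m s F f ε fstar) :
    codeCbar p F f ⊆ (dualCode (codeCbar p F f) : Set (F → ZMod p)) :=
  subset_dualCode_of_sum_sq_eq_zero (Ring.two_ne_zero (by rwa [ZMod.ringChar_zmod_n]))
    (fun _ hu _ hv => add_mem_codeCbar hu hv)
    fun _ hv => sum_sq_eq_zero_of_mem_codeCbar hp2 hm hms hcard hwr hv

theorem statement4 (p m s : ℕ) [Fact p.Prime] (hp2 : p ≠ 2) (hm : 2 ≤ m) (hs : s ≤ m)
    (hms : 3 ≤ m + s)
    (F : Type) [Field F] [Fintype F] [Algebra (ZMod p) F]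
    (hcard : Fintype.card F = p ^ m)
    (f : F → ZMod p) (hf0 : f 0 = 0) (ε : ℤ) (fstar : F → ZMod p)
    (hwr : IsWeaklyRegularPlateaued p m s F f ε fstar) :
    codeCbar p F f ⊆ (dualCode (codeCbar p F f) : Set (F → ZMod p)) :=
  statement4_general p m s hp2 hm hms F hcard f ε fstar hwr
end

section
/- Let p be an odd prime, m a positive integer, and let s be an integer with 0 ≤ s ≤ m such that m+s ≥ 3. Let f : F_q → F_p be a weakly regular s-plateaued function with f(0) = 0. Then the dual (C̄_f')^⊥ of the extended code C̄_f' has length p^m + m + 2, dimension p^m, and minimum distance exactly 3. -/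
open Finset

/-!
The extended code is systematic: its codewords are `(w, w H)` for the `(m + 2) × q` matrix `H`
whose column at `x` is `(1, f x + 1, Tr (α ^ i * x))_{i < m}`. Its dual is therefore the kernel
of the surjective map `u ↦ u_L + H u_R`, of dimension `q`, and a nonzero dual word has weight at
least `3` as soon as every column of `H` has weight at least `2` and any two columns are linearly
independent. Both hold because the trace form is nondegenerate and the powers `α ^ i`, `i < m`,
span `F_q`. Since `f 0 = 0`, the column at `0` is `(1, 1, 0, …, 0)`, so `(-H_0, e_0)` is a dual
word of weight `3`.
-/

open Matrix

section SystematicCode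

variable {K ι κ : Type} [Field K] [Fintype ι]

def systematicCode [Fintype κ] (H : Matrix κ ι K) : Set (κ ⊕ ι → K) :=
  Set.range fun w => Sum.elim w (w ᵥ* H)

def syndrome (H : Matrix κ ι K) : (κ ⊕ ι → K) →ₗ[K] κ → K :=
  LinearMap.funLeft K K Sum.inl + H.mulVecLin ∘ₗ LinearMap.funLeft K K Sum.inr

lemma syndrome_apply (H : Matrix κ ι K) (u : κ ⊕ ι → K) :
    syndrome H u = u ∘ Sum.inl + H *ᵥ (u ∘ Sum.inr) := rfl

lemma sum_mul_sum_elim_vecMul [Fintype κ] (H : Matrix κ ι K) (u : κ ⊕ ι → K) (w : κ → K) :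
    ∑ i, u i * Sum.elim w (w ᵥ* H) i = w ⬝ᵥ syndrome H u := by
  rw [Fintype.sum_sum_type, syndrome_apply, dotProduct_add, dotProduct_mulVec]
  simp only [Sum.elim_inl, Sum.elim_inr]
  rw [← dotProduct, ← dotProduct, dotProduct_comm _ w]
  exact congrArg _ (dotProduct_comm _ _)

lemma dualCode_systematicCode [Fintype κ] (H : Matrix κ ι K) :
    dualCode (systematicCode H) = LinearMap.ker (syndrome H) := by
  classical
  ext u
  change (∀ v ∈ systematicCode H, _) ↔ _
  simp only [systematicCode, Set.forall_mem_range, sum_mul_sum_elim_vecMul, LinearMap.mem_ker]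
  refine ⟨fun h => funext fun j => by simpa using h (Pi.single j 1), fun h w => by simp [h]⟩

lemma syndrome_surjective (H : Matrix κ ι K) : Function.Surjective (syndrome H) :=
  fun y => ⟨Sum.elim y 0, by simp [syndrome_apply]⟩

lemma finrank_ker_syndrome [Fintype κ] (H : Matrix κ ι K) :
    Module.finrank K (LinearMap.ker (syndrome H)) = Fintype.card ι := by
  have h := LinearMap.finrank_range_add_finrank_ker (syndrome H)
  rw [LinearMap.range_eq_top.mpr (syndrome_surjective H), finrank_top] at h
  simp only [Module.finrank_fintype_fun_eq_card, Fintype.card_sum] at h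
  omega

lemma hammingNorm_eq_inl_add_inr [Fintype κ] [DecidableEq K] (u : κ ⊕ ι → K) :
    hammingNorm u = hammingNorm (u ∘ Sum.inl) + hammingNorm (u ∘ Sum.inr) := by
  simp only [hammingNorm, card_filter, Fintype.sum_sum_type, Function.comp_apply]

lemma hammingNorm_fin_cons [DecidableEq K] {n : ℕ} (a : K) (v : Fin n → K) :
    hammingNorm (Fin.cons a v : Fin (n + 1) → K) = (if a ≠ 0 then 1 else 0) + hammingNorm v := by
  simp only [hammingNorm, card_filter, Fin.sum_univ_succ, Fin.cons_zero, Fin.cons_succ]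

lemma hammingNorm_neg [Fintype κ] [DecidableEq K] (v : κ → K) :
    hammingNorm (-v) = hammingNorm v := by
  simp only [hammingNorm, Pi.neg_apply, ne_eq, neg_eq_zero]

lemma hammingNorm_smul_of_ne_zero [Fintype κ] [DecidableEq K] {t : K} (ht : t ≠ 0)
    (v : κ → K) :
    hammingNorm (t • v) = hammingNorm v := by
  simp only [hammingNorm, Pi.smul_apply, smul_eq_mul, ne_eq, mul_eq_zero, ht, false_or]

lemma hammingNorm_single_one [DecidableEq K] [DecidableEq ι] (x : ι) :
    hammingNorm (Pi.single x 1 : ι → K) = 1 := by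
  simp [hammingNorm, Pi.single_apply, filter_eq']

lemma mulVec_eq_sum_filter_ne_zero [DecidableEq K] (H : Matrix κ ι K) (w : ι → K) :
    H *ᵥ w = ∑ x with w x ≠ 0, w x • H.col x := by
  rw [sum_filter_of_ne fun x _ hx => left_ne_zero_of_smul hx]
  ext j
  simp [mulVec, dotProduct, Finset.sum_apply, mul_comm]

theorem three_le_hammingNorm_of_syndrome_eq_zero [Fintype κ] [DecidableEq K] (H : Matrix κ ι K)
    (hcol : ∀ x, 2 ≤ hammingNorm (H.col x))
    (hpair : ∀ x y, x ≠ y → LinearIndependent K ![H.col x, H.col y])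
    {u : κ ⊕ ι → K} (hu : syndrome H u = 0) (hne : u ≠ 0) : 3 ≤ hammingNorm u := by
  classical
  set w := u ∘ Sum.inr with hw
  have hL : u ∘ Sum.inl = -(H *ᵥ w) := eq_neg_of_add_eq_zero_left hu
  have mem_support {x : ι} {s : Finset ι} (hs : univ.filter (w · ≠ 0) = s) (hx : x ∈ s) :
      w x ≠ 0 := by
    rw [← hs] at hx
    exact (mem_filter.mp hx).2
  rw [hammingNorm_eq_inl_add_inr, hL, ← hw, hammingNorm_neg, mulVec_eq_sum_filter_ne_zero]
  obtain h0 | h1 | h2 | h3 : hammingNorm w = 0 ∨ hammingNorm w = 1 ∨ hammingNorm w = 2 ∨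
      3 ≤ hammingNorm w := by omega
  · have hw0 : w = 0 := hammingNorm_eq_zero.mp h0
    refine absurd (funext ?_) hne
    rintro (j | x)
    · simpa [hw0] using congrFun hL j
    · exact congrFun hw0 x
  · obtain ⟨x, hx⟩ := card_eq_one.mp h1
    rw [hx, sum_singleton, hammingNorm_smul_of_ne_zero (mem_support hx (mem_singleton_self x)),
      h1]
    linarith [hcol x]
  · obtain ⟨x, y, hxy, hs⟩ := card_eq_two.mp h2
    have hsum : w x • H.col x + w y • H.col y ≠ 0 := fun h =>
      mem_support hs (mem_insert_self x {y}) (LinearIndependent.pair_iff.mp (hpair x y hxy) _ _ h).1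
    rw [hs, sum_pair hxy, h2]
    linarith [hammingNorm_pos_iff.mpr hsum]
  · omega

lemma syndrome_sum_elim_neg_col_single [DecidableEq ι] (H : Matrix κ ι K) (x : ι) :
    syndrome H (Sum.elim (-H.col x) (Pi.single x 1)) = 0 := by
  simp [syndrome_apply]

lemma hammingNorm_sum_elim_neg_col_single [Fintype κ] [DecidableEq K] [DecidableEq ι]
    (H : Matrix κ ι K) (x : ι) :
    hammingNorm (Sum.elim (-H.col x) (Pi.single x 1)) = hammingNorm (H.col x) + 1 := by
  rw [hammingNorm_eq_inl_add_inr, Sum.elim_comp_inl, Sum.elim_comp_inr, hammingNorm_neg,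
    hammingNorm_single_one]

end SystematicCode

section Trace

variable {K F : Type*} [Field K] [Field F] [Algebra K F]

lemma adjoin_singleton_eq_top_of_forall_eq_pow {α : F}
    (hα : ∀ x : F, x ≠ 0 → ∃ k : ℕ, x = α ^ k) : Algebra.adjoin K {α} = ⊤ := by
  refine eq_top_iff.mpr fun x _ => ?_
  obtain rfl | hx := eq_or_ne x 0
  · exact zero_mem _
  · obtain ⟨k, rfl⟩ := hα x hx
    exact pow_mem (Algebra.self_mem_adjoin_singleton K α) k

lemma span_range_pow_eq_top [FiniteDimensional K F] {α : F} (hα : Algebra.adjoin K {α} = ⊤)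
    {m : ℕ} (hm : Module.finrank K F ≤ m) :
    Submodule.span K (Set.range fun i : Fin m => α ^ (i : ℕ)) = ⊤ := by
  have hint : IsIntegral K α := IsIntegral.of_finite K α
  have hspan := Submodule.span_range_natDegree_eq_adjoin (minpoly.monic hint) (minpoly.aeval K α)
  rw [hα, Algebra.top_toSubmodule] at hspan
  rw [eq_top_iff, ← hspan]
  refine Submodule.span_mono ?_
  intro y hy
  simp only [coe_image, Set.mem_image, mem_coe, mem_range] at hy
  obtain ⟨i, hi, rfl⟩ := hy
  exact ⟨⟨i, hi.trans_le ((minpoly.natDegree_le α).trans hm)⟩, rfl⟩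

lemma eq_zero_of_forall_trace_pow_mul_eq_zero [FiniteDimensional K F] [Algebra.IsSeparable K F]
    {α : F} (hα : Algebra.adjoin K {α} = ⊤) {m : ℕ} (hm : Module.finrank K F ≤ m) {z : F}
    (h : ∀ i : Fin m, Algebra.trace K F (α ^ (i : ℕ) * z) = 0) : z = 0 := by
  refine (traceForm_nondegenerate K F).1 z fun w => ?_
  have hz : Algebra.traceForm K F z = 0 := by
    refine LinearMap.ext_on (span_range_pow_eq_top hα hm) ?_
    rintro _ ⟨i, rfl⟩
    simpa [Algebra.traceForm_apply, mul_comm] using h i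
  rw [hz, LinearMap.zero_apply]

end Trace

section ExtCode

variable {p m : ℕ} {F : Type} [Field F] [Algebra (ZMod p) F] {f : F → ZMod p} {α : F}

noncomputable def extCheckMatrix (p m : ℕ) (F : Type) [Field F] [Algebra (ZMod p) F]
    (f : F → ZMod p) (α : F) : Matrix (Fin (m + 2)) F (ZMod p) :=
  Matrix.of fun j x => (Fin.cons 1 (Fin.cons (f x + 1)
    fun i : Fin m => Algebra.trace (ZMod p) F (α ^ (i : ℕ) * x)) : Fin (m + 2) → ZMod p) j

lemma col_extCheckMatrix (x : F) : (extCheckMatrix p m F f α).col x =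
    Fin.cons 1 (Fin.cons (f x + 1) fun i : Fin m => Algebra.trace (ZMod p) F (α ^ (i : ℕ) * x)) :=
  rfl

lemma vecMul_extCheckMatrix_cons (c a : ZMod p) (aa : Fin m → ZMod p) (x : F) :
    (Fin.cons c (Fin.cons a aa) ᵥ* extCheckMatrix p m F f α) x =
      a * f x + Algebra.trace (ZMod p) F ((∑ i, aa i • α ^ (i : ℕ)) * x) + a + c := by
  simp only [vecMul, dotProduct, Fin.sum_univ_succ, Fin.cons_zero, Fin.cons_succ, extCheckMatrix,
    Matrix.of_apply, Finset.sum_mul, map_sum, smul_mul_assoc, map_smul, smul_eq_mul]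
  ring

lemma extCode_eq_systematicCode [Fact p.Prime] [Fintype F] :
    extCode p m F f α = systematicCode (extCheckMatrix p m F f α) := by
  ext v
  constructor
  · rintro ⟨c, a, aa, rfl⟩
    exact ⟨Fin.cons c (Fin.cons a aa), congrArg _ (funext (vecMul_extCheckMatrix_cons c a aa))⟩
  · rintro ⟨w, rfl⟩
    have hw : w = Fin.cons (w 0) (Fin.cons (w 1) fun i => w i.succ.succ) := by
      ext j
      refine Fin.cases rfl (Fin.cases ?_ fun i => rfl) j
      simp
    refine ⟨w 0, w 1, fun i => w i.succ.succ, ?_⟩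
    conv_lhs => rw [hw]
    exact congrArg _ (funext (vecMul_extCheckMatrix_cons _ _ _))

lemma hammingNorm_col_extCheckMatrix_zero [Fact p.Prime] (hf0 : f 0 = 0) :
    hammingNorm ((extCheckMatrix p m F f α).col 0) = 2 := by
  rw [col_extCheckMatrix, hammingNorm_fin_cons, hammingNorm_fin_cons]
  simp [hf0, ← Pi.zero_def]

variable [Fact p.Prime] [Fintype F]

lemma two_le_hammingNorm_col_extCheckMatrix (hα : Algebra.adjoin (ZMod p) {α} = ⊤)
    (hm : Module.finrank (ZMod p) F ≤ m) (hf0 : f 0 = 0) (x : F) :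
    2 ≤ hammingNorm ((extCheckMatrix p m F f α).col x) := by
  rw [col_extCheckMatrix, hammingNorm_fin_cons, if_pos one_ne_zero, add_comm]
  refine Nat.succ_le_succ (Nat.one_le_iff_ne_zero.mpr (hammingNorm_ne_zero_iff.mpr fun h => ?_))
  have hfx : f x + 1 = 0 := by simpa using congrFun h 0
  have hx : x = 0 := eq_zero_of_forall_trace_pow_mul_eq_zero hα hm fun i => by
    simpa using congrFun h i.succ
  simp [hx, hf0] at hfx

lemma linearIndependent_col_extCheckMatrix (hα : Algebra.adjoin (ZMod p) {α} = ⊤)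
    (hm : Module.finrank (ZMod p) F ≤ m) {x y : F} (hxy : x ≠ y) :
    LinearIndependent (ZMod p)
      ![(extCheckMatrix p m F f α).col x, (extCheckMatrix p m F f α).col y] := by
  refine LinearIndependent.pair_iff.mpr fun s t h => ?_
  have hst : s + t = 0 := by simpa [col_extCheckMatrix] using congrFun h 0
  obtain rfl : t = -s := eq_neg_of_add_eq_zero_right hst
  suffices s = 0 by simp [this]
  by_contra hs
  refine hxy (sub_eq_zero.mp (eq_zero_of_forall_trace_pow_mul_eq_zero hα hm fun i => ?_))
  have hi := congrFun h i.succ.succ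
  simp only [col_extCheckMatrix, neg_smul, Pi.add_apply, Pi.smul_apply, Fin.cons_succ,
    smul_eq_mul, Pi.neg_apply, Pi.zero_apply] at hi
  rw [mul_sub, map_sub]
  exact (mul_eq_zero.mp (by linear_combination hi)).resolve_left hs

end ExtCode

theorem statement10_general (p m : ℕ) [Fact p.Prime]
    (F : Type) [Field F] [Fintype F] [Algebra (ZMod p) F]
    (hcard : Fintype.card F = p ^ m)
    (α : F) (hα : ∀ x : F, x ≠ 0 → ∃ k : ℕ, x = α ^ k)
    (f : F → ZMod p) (hf0 : f 0 = 0) :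
    Fintype.card (Fin (m + 2) ⊕ F) = p ^ m + m + 2 ∧
    Module.finrank (ZMod p) (dualCode (extCode p m F f α)) = p ^ m ∧
    hasMinDist (dualCode (extCode p m F f α) : Set (Fin (m + 2) ⊕ F → ZMod p)) 3 := by
  classical
  have hm : Module.finrank (ZMod p) F ≤ m := by
    have h := Module.card_eq_pow_finrank (K := ZMod p) (V := F)
    rw [ZMod.card, hcard] at h
    exact (Nat.pow_right_injective (Fact.out : p.Prime).two_le h).ge
  have hadj : Algebra.adjoin (ZMod p) {α} = ⊤ := adjoin_singleton_eq_top_of_forall_eq_pow hα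
  set H := extCheckMatrix p m F f α
  have hweight : hammingNorm (Sum.elim (-H.col 0) (Pi.single (0 : F) 1)) = 3 := by
    rw [hammingNorm_sum_elim_neg_col_single, hammingNorm_col_extCheckMatrix_zero hf0]
  rw [extCode_eq_systematicCode, dualCode_systematicCode]
  refine ⟨by simp [hcard]; omega, by rw [finrank_ker_syndrome, hcard],
    ⟨_, syndrome_sum_elim_neg_col_single H 0, hammingNorm_ne_zero_iff.mp (by omega), hweight⟩,
    fun u hu hne => ?_⟩
  exact three_le_hammingNorm_of_syndrome_eq_zero H
    (two_le_hammingNorm_col_extCheckMatrix hadj hm hf0)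
    (fun _ _ => linearIndependent_col_extCheckMatrix hadj hm) hu hne

theorem statement10 (p m s : ℕ) [Fact p.Prime] (hp2 : p ≠ 2) (hm : 1 ≤ m) (hs : s ≤ m)
    (hms : 3 ≤ m + s)
    (F : Type) [Field F] [Fintype F] [Algebra (ZMod p) F]
    (hcard : Fintype.card F = p ^ m)
    (α : F) (hα : ∀ x : F, x ≠ 0 → ∃ k : ℕ, x = α ^ k)
    (f : F → ZMod p) (hf0 : f 0 = 0) (ε : ℤ) (fstar : F → ZMod p)
    (hwr : IsWeaklyRegularPlateaued p m s F f ε fstar) :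
    Fintype.card (Fin (m + 2) ⊕ F) = p ^ m + m + 2 ∧
    Module.finrank (ZMod p) (dualCode (extCode p m F f α)) = p ^ m ∧
    hasMinDist (dualCode (extCode p m F f α) : Set (Fin (m + 2) ⊕ F → ZMod p)) 3 :=
  statement10_general p m F hcard α hα f hf0
end

section
/- Let m ≥ 2 be an integer and let s be an integer with 0 ≤ s ≤ m−2 such that m+s is even, and let f : F_q → F_2 (q = 2^m) be an s-plateaued Boolean function with f(0) = 0. Then the binary code C̄_f has length 2^m, dimension m+2, and minimum distance 2^{m−1} − 2^{(m+s−2)/2}, and its nonzero weights and the numbers of codewords of each weight are: weight 2^{m−1} − 2^{(m+s−2)/2} with frequency 2^{m−s}; weight 2^{m−1} + 2^{(m+s−2)/2} with frequency 2^{m−s}; weight 2^{m−1} with frequency 2^{m+2} − 2^{m−s+1} − 2; and weight 2^m with frequency 1. -/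
open Finset

/-!
A codeword `v = a f + Tr(b ·) + c` of `C̄_f` has weight `(q - S)/2`, where its imbalance
`S = ∑ₓ (-1)^{v(x)}` equals `(-1)^c W_{a f}(b)`. For `a = 0` this is `±q` at `b = 0` and `0`
elsewhere; for `a = 1` it is `±W_f(b) ∈ {0, ±2^{(m+s)/2}}`. Parseval's identity
`∑_b W_f(b)² = q²` forces `W_f` to be nonzero at exactly `2^{m-s}` points, and counting the
parameters `(a, b, c)` by the value of `S` gives the weight distribution. Since `|W_f| < q`, only
`(0, 0, 0)` has `S = q`, so the parametrisation is injective.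
-/

namespace PlateauedCode

section Sign

lemma zmod_two_eq_zero_or_eq_one (a : ZMod 2) : a = 0 ∨ a = 1 := by
  revert a
  decide

lemma sum_zmod_two {M : Type*} [AddCommMonoid M] (g : ZMod 2 → M) :
    ∑ a, g a = g 0 + g 1 :=
  Fin.sum_univ_two g

def sign : AddChar (ZMod 2) ℤ := AddChar.zmodChar 2 (neg_one_sq : (-1 : ℤ) ^ 2 = 1)

lemma sign_apply (a : ZMod 2) : sign a = (-1) ^ a.val := rfl

@[simp] lemma sign_zero : sign 0 = 1 := rfl

@[simp] lemma sign_one : sign 1 = -1 := rfl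

@[simp] lemma sign_mul_self (a : ZMod 2) : sign a * sign a = 1 := by
  rcases zmod_two_eq_zero_or_eq_one a with rfl | rfl <;> rfl

@[simp] lemma abs_sign (a : ZMod 2) : |sign a| = 1 := by
  rcases zmod_two_eq_zero_or_eq_one a with rfl | rfl <;> rfl

def imbalance {ι : Type*} [Fintype ι] (v : ι → ZMod 2) : ℤ := ∑ i, sign (v i)

lemma imbalance_zero {ι : Type*} [Fintype ι] :
    imbalance (0 : ι → ZMod 2) = Fintype.card ι := by
  simp [imbalance]

lemma two_mul_wtH {ι : Type} [Fintype ι] (v : ι → ZMod 2) :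
    2 * (wtH v : ℤ) = Fintype.card ι - imbalance v := by
  classical
  have hsign (a : ZMod 2) : sign a = 1 - 2 * if a ≠ 0 then 1 else 0 := by
    rcases zmod_two_eq_zero_or_eq_one a with rfl | rfl <;> rfl
  simp only [imbalance, hsign, Finset.sum_sub_distrib, ← Finset.mul_sum, Finset.sum_boole, wtH]
  simp

lemma wtH_eq_zero_iff {ι : Type} [Fintype ι] (v : ι → ZMod 2) : wtH v = 0 ↔ v = 0 := by
  simp [wtH, funext_iff]

lemma card_filter_sign_mul_eq {ι : Type*} [Fintype ι] (g : ι → ℤ) (t : ℤ) :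
    #{x : ι × ZMod 2 | sign x.2 * g x.1 = t} = #{i | g i = t} + #{i | g i = -t} := by
  rw [Finset.card_filter, Finset.card_filter, Finset.card_filter, Fintype.sum_prod_type,
    ← Finset.sum_add_distrib]
  refine Finset.sum_congr rfl fun i _ => ?_
  simp only [sum_zmod_two, sign_zero, sign_one, one_mul, neg_one_mul, neg_eq_iff_eq_neg]

lemma abs_le_of_eq_zero_or_eq_or_eq_neg {x t : ℤ} (h : x = 0 ∨ x = t ∨ x = -t)
    (ht : 0 ≤ t) : |x| ≤ t := by
  rcases h with rfl | rfl | rfl <;> simp [abs_of_nonneg ht, ht]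

end Sign

section Walsh

variable {F : Type} [Field F] [Algebra (ZMod 2) F]

variable (F) in
noncomputable def traceChar : AddChar F ℤ :=
  sign.compAddMonoidHom (Algebra.trace (ZMod 2) F).toAddMonoidHom

lemma traceChar_apply (x : F) : traceChar F x = sign (Algebra.trace (ZMod 2) F x) := rfl

variable [Fintype F]

lemma traceChar_isPrimitive : (traceChar F).IsPrimitive := by
  refine AddChar.IsPrimitive.of_ne_one (AddChar.ne_one_iff.2 ?_)
  obtain ⟨x, hx⟩ := Algebra.trace_surjective (ZMod 2) F 1
  exact ⟨x, by rw [traceChar_apply, hx, sign_one]; decide⟩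

lemma walsh2_eq_sum (f : F → ZMod 2) (b : F) :
    walsh2 F f b = ∑ x, sign (f x) * traceChar F (b * x) := by
  simp only [walsh2, traceChar_apply, ← AddChar.map_add_eq_mul, ← sign_apply]

lemma walsh2_zero_fun [DecidableEq F] (b : F) :
    walsh2 F 0 b = if b = 0 then (Fintype.card F : ℤ) else 0 := by
  simp only [walsh2_eq_sum, Pi.zero_apply, sign_zero, one_mul, mul_comm b]
  exact_mod_cast AddChar.sum_mulShift b traceChar_isPrimitive

lemma sum_walsh2_sq (f : F → ZMod 2) :
    ∑ b, walsh2 F f b ^ 2 = (Fintype.card F : ℤ) ^ 2 := by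
  classical
  have : CharP F 2 := charP_of_injective_algebraMap (algebraMap (ZMod 2) F).injective 2
  calc ∑ b, walsh2 F f b ^ 2
      = ∑ b, ∑ x, ∑ y, sign (f x) * sign (f y) * traceChar F (b * (x + y)) := by
        refine Finset.sum_congr rfl fun b _ => ?_
        rw [sq, walsh2_eq_sum, Finset.sum_mul_sum]
        refine Finset.sum_congr rfl fun x _ => Finset.sum_congr rfl fun y _ => ?_
        rw [mul_add, AddChar.map_add_eq_mul]
        ring
    _ = ∑ x, ∑ y, sign (f x) * sign (f y) * ∑ b, traceChar F (b * (x + y)) := by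
        simp_rw [Finset.mul_sum]
        rw [Finset.sum_comm]
        exact Finset.sum_congr rfl fun x _ => Finset.sum_comm
    _ = ∑ x, (Fintype.card F : ℤ) := by
        refine Finset.sum_congr rfl fun x _ => ?_
        simp_rw [AddChar.sum_mulShift _ traceChar_isPrimitive, CharTwo.add_eq_zero]
        simp
    _ = (Fintype.card F : ℤ) ^ 2 := by simp [sq]

lemma exists_walsh2_ne_zero (f : F → ZMod 2) : ∃ b, walsh2 F f b ≠ 0 := by
  by_contra! h
  have hparseval := sum_walsh2_sq f
  simp only [h, zero_pow two_ne_zero, Finset.sum_const_zero] at hparseval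
  exact absurd hparseval.symm (by positivity)

lemma card_filter_walsh2_zero_fun_eq_card :
    #{b : F | walsh2 F 0 b = Fintype.card F} = 1 := by
  classical
  have hq : (Fintype.card F : ℤ) ≠ 0 := by exact_mod_cast Fintype.card_ne_zero
  refine Finset.card_eq_one.2 ⟨0, Finset.ext fun b => ?_⟩
  by_cases hb : b = 0 <;> simp [walsh2_zero_fun, hb, hq.symm]

lemma card_filter_walsh2_zero_fun_eq_zero :
    #{b : F | walsh2 F 0 b = 0} + 1 = Fintype.card F := by
  classical
  have hq : (Fintype.card F : ℤ) ≠ 0 := by exact_mod_cast Fintype.card_ne_zero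
  simp only [walsh2_zero_fun, ite_eq_right_iff, hq, imp_false, Finset.filter_ne',
    Finset.card_erase_add_one (Finset.mem_univ _), Finset.card_univ]

lemma card_filter_walsh2_zero_fun_eq_of_ne {t : ℤ} (ht : t ≠ 0) (htq : t ≠ Fintype.card F) :
    #{b : F | walsh2 F 0 b = t} = 0 := by
  classical
  refine Finset.card_eq_zero.2 (Finset.filter_eq_empty_iff.2 fun b _ => ?_)
  rw [walsh2_zero_fun]
  split_ifs <;> omega

namespace IsPlateaued2

variable {m s k : ℕ} {f : F → ZMod 2}

lemma walsh2_eq_zero_or_eq_or_eq_neg (hpl : IsPlateaued2 m s F f) (hk : m + s = k + k)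
    (b : F) : walsh2 F f b = 0 ∨ walsh2 F f b = 2 ^ k ∨ walsh2 F f b = -2 ^ k := by
  rcases hpl b with h | h
  · exact .inl (pow_eq_zero_iff two_ne_zero |>.1 h)
  · rw [hk, pow_add, ← sq] at h
    exact .inr (sq_eq_sq_iff_eq_or_eq_neg.1 h)

lemma card_walsh2_ne_zero (hpl : IsPlateaued2 m s F f) (hcard : Fintype.card F = 2 ^ m)
    (hsm : s ≤ m) : #{b | walsh2 F f b ≠ 0} = 2 ^ (m - s) := by
  have hsq (b : F) : walsh2 F f b ^ 2 = if walsh2 F f b ≠ 0 then 2 ^ (m + s) else 0 := by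
    rcases hpl b with h | h
    · simp [pow_eq_zero_iff two_ne_zero |>.1 h]
    · have : walsh2 F f b ≠ 0 := fun h0 => by
        rw [h0, zero_pow two_ne_zero] at h
        exact absurd h.symm (by positivity)
      simp [this, h]
  have hparseval := sum_walsh2_sq f
  simp only [hsq, Finset.sum_ite, Finset.sum_const, nsmul_eq_mul, mul_zero, add_zero,
    hcard] at hparseval
  have h2m : ((2 : ℤ) ^ m) ^ 2 = 2 ^ (m - s) * 2 ^ (m + s) := by
    rw [← pow_mul, ← pow_add]; congr 1; omega
  push_cast at hparseval
  rw [h2m] at hparseval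
  exact_mod_cast mul_right_cancel₀ (by positivity : (2 : ℤ) ^ (m + s) ≠ 0) hparseval

end IsPlateaued2

end Walsh

section Code

variable {F : Type} [Field F] [Algebra (ZMod 2) F]

noncomputable def codeword (f : F → ZMod 2) : ZMod 2 × F × ZMod 2 →+ (F → ZMod 2) where
  toFun p x := p.1 * f x + Algebra.trace (ZMod 2) F (p.2.1 * x) + p.2.2
  map_zero' := by ext; simp
  map_add' p q := by
    ext x
    simp only [Prod.fst_add, Prod.snd_add, add_mul, map_add, Pi.add_apply]
    ring

lemma codeword_apply (f : F → ZMod 2) (p : ZMod 2 × F × ZMod 2) (x : F) :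
    codeword f p x = p.1 * f x + Algebra.trace (ZMod 2) F (p.2.1 * x) + p.2.2 := rfl

variable [Fintype F] {f : F → ZMod 2}

lemma codeCbar_eq_range (f : F → ZMod 2) : codeCbar 2 F f = Set.range (codeword f) := by
  ext v
  constructor
  · rintro ⟨a, c, b, rfl⟩
    exact ⟨(a, b, c), rfl⟩
  · rintro ⟨⟨a, b, c⟩, rfl⟩
    exact ⟨a, c, b, rfl⟩

lemma imbalance_codeword (f : F → ZMod 2) (a : ZMod 2) (b : F) (c : ZMod 2) :
    imbalance (codeword f (a, b, c)) = sign c * walsh2 F (a • f) b := by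
  simp only [imbalance, codeword_apply, AddChar.map_add_eq_mul, walsh2, Finset.mul_sum,
    Pi.smul_apply, smul_eq_mul, ← sign_apply]
  exact Finset.sum_congr rfl fun x _ => mul_comm _ _

lemma card_filter_imbalance_codeword_eq (f : F → ZMod 2) (t : ℤ) :
    #{p | imbalance (codeword f p) = t} =
      #{b | walsh2 F 0 b = t} + #{b | walsh2 F 0 b = -t} +
        (#{b | walsh2 F f b = t} + #{b | walsh2 F f b = -t}) := by
  rw [← card_filter_sign_mul_eq, ← card_filter_sign_mul_eq, Finset.card_filter,
    Fintype.sum_prod_type, sum_zmod_two, Finset.card_filter, Finset.card_filter]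
  simp only [Fintype.sum_prod_type, imbalance_codeword, zero_smul, one_smul]

lemma card_filter_imbalance_codeword_neg (f : F → ZMod 2) (t : ℤ) :
    #{p | imbalance (codeword f p) = -t} = #{p | imbalance (codeword f p) = t} := by
  simp only [card_filter_imbalance_codeword_eq, neg_neg]
  ring

lemma card_filter_imbalance_codeword_eq_zero (f : F → ZMod 2) :
    #{p | imbalance (codeword f p) = 0} + 2 * #{b | walsh2 F f b ≠ 0} + 2 =
      4 * Fintype.card F := by
  have hW := Finset.card_filter_add_card_filter_not (s := Finset.univ)
    (fun b : F => walsh2 F f b = 0)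
  have hW0 := card_filter_walsh2_zero_fun_eq_zero (F := F)
  rw [card_filter_imbalance_codeword_eq, neg_zero]
  simp only [Finset.card_univ, ← ne_eq] at hW
  omega

lemma card_filter_imbalance_codeword_eq_of_spectrum {t : ℤ}
    (hW : ∀ b, walsh2 F f b = 0 ∨ walsh2 F f b = t ∨ walsh2 F f b = -t) (ht : 0 < t)
    (htq : t < Fintype.card F) :
    #{p | imbalance (codeword f p) = t} = #{b | walsh2 F f b ≠ 0} := by
  classical
  have hsupp : #{b | walsh2 F f b = t} + #{b | walsh2 F f b = -t} = #{b | walsh2 F f b ≠ 0} := by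
    rw [← Finset.card_union_of_disjoint (Finset.disjoint_filter.2 fun b _ h h' => by omega),
      ← Finset.filter_or]
    exact congrArg Finset.card
      (Finset.filter_congr fun b _ => by rcases hW b with h | h | h <;> omega)
  rw [card_filter_imbalance_codeword_eq, card_filter_walsh2_zero_fun_eq_of_ne (by omega) (by omega),
    card_filter_walsh2_zero_fun_eq_of_ne (by omega) (by omega), hsupp, zero_add, zero_add]

lemma card_filter_imbalance_codeword_eq_card (hW : ∀ b, |walsh2 F f b| < Fintype.card F) :
    #{p | imbalance (codeword f p) = Fintype.card F} = 1 := by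
  have hq : (0 : ℤ) < Fintype.card F := by exact_mod_cast Fintype.card_pos
  have hnot (t : ℤ) (ht : |t| = Fintype.card F) : #{b | walsh2 F f b = t} = 0 :=
    Finset.card_eq_zero.2 (Finset.filter_eq_empty_iff.2 fun b _ h => by
      have := hW b; rw [h] at this; omega)
  rw [card_filter_imbalance_codeword_eq, card_filter_walsh2_zero_fun_eq_card,
    card_filter_walsh2_zero_fun_eq_of_ne (by omega) (by omega), hnot _ (abs_of_pos hq),
    hnot _ (by rw [abs_neg, abs_of_pos hq])]

lemma codeword_injective (hW : ∀ b, |walsh2 F f b| < Fintype.card F) :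
    Function.Injective (codeword f) := by
  refine (injective_iff_map_eq_zero _).2 fun p hp => ?_
  have h := card_filter_imbalance_codeword_eq_card hW
  refine Finset.card_le_one.1 h.le p ?_ 0 ?_ <;>
    simp [hp, imbalance_zero]

lemma imbalance_codeword_eq_card_or_le {t : ℤ} (hW : ∀ b, |walsh2 F f b| ≤ t) (ht : 0 ≤ t)
    (p : ZMod 2 × F × ZMod 2) :
    imbalance (codeword f p) = Fintype.card F ∨ imbalance (codeword f p) ≤ t := by
  classical
  obtain ⟨a, b, c⟩ := p
  rw [imbalance_codeword]
  rcases zmod_two_eq_zero_or_eq_one a with rfl | rfl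
  · rw [zero_smul, walsh2_zero_fun]
    split_ifs
    · rcases zmod_two_eq_zero_or_eq_one c with rfl | rfl
      · simp
      · right
        rw [sign_one, neg_one_mul]
        exact (neg_nonpos.2 (by positivity)).trans ht
    · simp [ht]
  · right
    calc sign c * walsh2 F ((1 : ZMod 2) • f) b ≤ |sign c * walsh2 F f b| := by
          rw [one_smul]; exact le_abs_self _
      _ = |walsh2 F f b| := by rw [abs_mul, abs_sign, one_mul]
      _ ≤ t := hW b

lemma ncard_codeCbar (hinj : Function.Injective (codeword f)) :
    (codeCbar 2 F f).ncard = 4 * Fintype.card F := by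
  rw [codeCbar_eq_range, ← Set.image_univ, Set.ncard_image_of_injective _ hinj, Set.ncard_univ,
    Nat.card_eq_fintype_card, Fintype.card_prod, Fintype.card_prod, ZMod.card]
  ring

lemma ncard_filter_wtH_codeCbar (hinj : Function.Injective (codeword f)) {w : ℕ} {t : ℤ}
    (hwt : (Fintype.card F : ℤ) - 2 * w = t) :
    {v ∈ codeCbar 2 F f | wtH v = w}.ncard = #{p | imbalance (codeword f p) = t} := by
  subst hwt
  have hw (p) : wtH (codeword f p) = w ↔ imbalance (codeword f p) = Fintype.card F - 2 * w := by
    have := two_mul_wtH (codeword f p)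
    omega
  have himage : {v ∈ codeCbar 2 F f | wtH v = w} =
      codeword f '' ↑(Finset.univ.filter fun p =>
        imbalance (codeword f p) = Fintype.card F - 2 * w) := by
    ext v
    simp only [codeCbar_eq_range, Set.mem_ofPred_eq, Set.mem_range, Set.mem_image,
      Finset.coe_filter, Finset.mem_univ, true_and, ← hw]
    constructor
    · rintro ⟨⟨p, rfl⟩, h⟩
      exact ⟨p, h, rfl⟩
    · rintro ⟨p, h, rfl⟩
      exact ⟨⟨p, rfl⟩, h⟩
  rw [himage, Set.ncard_image_of_injective _ hinj, Set.ncard_coe_finset]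

lemma hasMinDist_codeCbar {t : ℤ} {d : ℕ}
    (hW : ∀ b, walsh2 F f b = 0 ∨ walsh2 F f b = t ∨ walsh2 F f b = -t) (ht : 0 < t)
    (htq : t < Fintype.card F) (hd : 2 * (d : ℤ) = Fintype.card F - t) :
    hasMinDist (codeCbar 2 F f) d := by
  have hwt (p) : 2 * (wtH (codeword f p) : ℤ) = Fintype.card F - imbalance (codeword f p) :=
    two_mul_wtH _
  refine ⟨?_, ?_⟩
  · obtain ⟨b, hb⟩ := exists_walsh2_ne_zero f
    obtain ⟨p, hp⟩ : (Finset.univ.filter fun p => imbalance (codeword f p) = t).Nonempty := by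
      rw [← Finset.card_pos, card_filter_imbalance_codeword_eq_of_spectrum hW ht htq]
      exact Finset.card_pos.2 ⟨b, by simpa using hb⟩
    have hpd : wtH (codeword f p) = d := by
      have := hwt p
      simp only [Finset.mem_filter, Finset.mem_univ, true_and] at hp
      omega
    refine ⟨codeword f p, codeCbar_eq_range f ▸ ⟨p, rfl⟩, fun h0 => ?_, hpd⟩
    rw [h0, (wtH_eq_zero_iff _).2 rfl] at hpd
    omega
  · rintro v hv hv0
    obtain ⟨p, rfl⟩ := codeCbar_eq_range f ▸ hv
    rcases imbalance_codeword_eq_card_or_le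
      (fun b => abs_le_of_eq_zero_or_eq_or_eq_neg (hW b) ht.le) ht.le p with h | h
    · exact absurd ((wtH_eq_zero_iff _).1 (by have := hwt p; omega)) hv0
    · have := hwt p
      omega

end Code

end PlateauedCode

open PlateauedCode in
theorem statement12_general (m s : ℕ) (hm : 2 ≤ m) (hs : s ≤ m - 2) (hpar : Even (m + s))
    (F : Type) [Field F] [Fintype F] [Algebra (ZMod 2) F]
    (hcard : Fintype.card F = 2 ^ m)
    (f : F → ZMod 2) (hpl : IsPlateaued2 m s F f) :
    Set.ncard (codeCbar 2 F f) = 2 ^ (m + 2) ∧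
    hasMinDist (codeCbar 2 F f) (2 ^ (m - 1) - 2 ^ ((m + s - 2) / 2)) ∧
    Set.ncard {v ∈ codeCbar 2 F f | wtH v = 2 ^ (m - 1) - 2 ^ ((m + s - 2) / 2)}
      = 2 ^ (m - s) ∧
    Set.ncard {v ∈ codeCbar 2 F f | wtH v = 2 ^ (m - 1) + 2 ^ ((m + s - 2) / 2)}
      = 2 ^ (m - s) ∧
    Set.ncard {v ∈ codeCbar 2 F f | wtH v = 2 ^ (m - 1)}
      = 2 ^ (m + 2) - 2 ^ (m - s + 1) - 2 ∧
    Set.ncard {v ∈ codeCbar 2 F f | wtH v = 2 ^ m} = 1 := by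
  obtain ⟨k, hk⟩ := hpar
  -- `m = n + 1` and `k = j + 1` remove the truncated subtractions from the weights.
  obtain ⟨n, rfl⟩ : ∃ n, m = n + 1 := ⟨m - 1, by omega⟩
  obtain ⟨j, rfl⟩ : ∃ j, k = j + 1 := ⟨k - 1, by omega⟩
  rw [show (n + 1 + s - 2) / 2 = j by omega, Nat.add_sub_cancel]
  have hW := hpl.walsh2_eq_zero_or_eq_or_eq_neg hk
  have hN := hpl.card_walsh2_ne_zero hcard (by omega)
  have hq : (Fintype.card F : ℤ) = 2 * 2 ^ n := by rw [hcard]; push_cast; ring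
  have ht : (0 : ℤ) < 2 ^ (j + 1) := by positivity
  have htq : (2 : ℤ) ^ (j + 1) < Fintype.card F := by
    rw [hcard]; push_cast; exact pow_lt_pow_right₀ one_lt_two (by omega)
  have hWq (b : F) : |walsh2 F f b| < Fintype.card F :=
    (abs_le_of_eq_zero_or_eq_or_eq_neg (hW b) ht.le).trans_lt htq
  have hinj := codeword_injective hWq
  have hjn : ((2 ^ n - 2 ^ j : ℕ) : ℤ) = 2 ^ n - 2 ^ j := by
    push_cast [Nat.pow_le_pow_right two_pos (show j ≤ n by omega)]
    ring
  refine ⟨?_, hasMinDist_codeCbar hW ht htq (by rw [hjn, hq]; ring), ?_, ?_, ?_, ?_⟩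
  · rw [ncard_codeCbar hinj, hcard]
    ring
  · rw [ncard_filter_wtH_codeCbar hinj (t := 2 ^ (j + 1)) (by rw [hjn, hq]; ring),
      card_filter_imbalance_codeword_eq_of_spectrum hW ht htq, hN]
  · rw [ncard_filter_wtH_codeCbar hinj (t := -2 ^ (j + 1)) (by rw [hq]; push_cast; ring),
      card_filter_imbalance_codeword_neg, card_filter_imbalance_codeword_eq_of_spectrum hW ht htq,
      hN]
  · have hmid := card_filter_imbalance_codeword_eq_zero f
    rw [hN, hcard] at hmid
    rw [ncard_filter_wtH_codeCbar hinj (t := 0) (by rw [hq]; push_cast; ring),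
      pow_succ _ (n + 1 - s), pow_add]
    omega
  · rw [ncard_filter_wtH_codeCbar hinj (t := -Fintype.card F) (by rw [hq]; push_cast; ring),
      card_filter_imbalance_codeword_neg, card_filter_imbalance_codeword_eq_card hWq]

theorem statement12 (m s : ℕ) (hm : 2 ≤ m) (hs : s ≤ m - 2) (hpar : Even (m + s))
    (F : Type) [Field F] [Fintype F] [Algebra (ZMod 2) F]
    (hcard : Fintype.card F = 2 ^ m)
    (f : F → ZMod 2) (hf0 : f 0 = 0) (hpl : IsPlateaued2 m s F f) :
    Set.ncard (codeCbar 2 F f) = 2 ^ (m + 2) ∧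
    hasMinDist (codeCbar 2 F f) (2 ^ (m - 1) - 2 ^ ((m + s - 2) / 2)) ∧
    Set.ncard {v ∈ codeCbar 2 F f | wtH v = 2 ^ (m - 1) - 2 ^ ((m + s - 2) / 2)}
      = 2 ^ (m - s) ∧
    Set.ncard {v ∈ codeCbar 2 F f | wtH v = 2 ^ (m - 1) + 2 ^ ((m + s - 2) / 2)}
      = 2 ^ (m - s) ∧
    Set.ncard {v ∈ codeCbar 2 F f | wtH v = 2 ^ (m - 1)}
      = 2 ^ (m + 2) - 2 ^ (m - s + 1) - 2 ∧
    Set.ncard {v ∈ codeCbar 2 F f | wtH v = 2 ^ m} = 1 :=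
  statement12_general m s hm hs hpar F hcard f hpl
end

section
/- Let m be an integer and let s be an integer with 0 ≤ s ≤ m−2 such that m+s is even and m+s ≥ 6, and let f : F_q → F_2 (q = 2^m) be an s-plateaued Boolean function with f(0) = 0. Then the binary code C̄_f is self-orthogonal (C̄_f ⊆ C̄_f^⊥), and its dual C̄_f^⊥ has length 2^m, dimension 2^m − m − 2, and minimum distance exactly 4. -/
open Finset

/-!
Since `2 wt(g) = q - ∑ₓ (-1)^{g(x)}`, a codeword `a f + Tr(b·) + c` has weight `(q ∓ S) / 2`,
where `S` is either `W_f(b) ∈ {0, ±2^{(m+s)/2}}` or `q·[b = 0]`. Both are divisible by 8, so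
`C̄_f` is doubly even and therefore self-orthogonal. As `s < m`, `f` is not affine, so
`(a, b, c) ↦ a f + Tr(b·) + c` is injective and `C̄_f^⊥` has dimension `q - (m + 2)`.
A binary word with support `T` lies in `C̄_f^⊥` iff `#T` is even, `∑_T x = 0` and
`∑_T f = 0`; this excludes weight 2, and since there are more pairs `{x, y}` than values
`(x + y, f x + f y)`, two disjoint pairs collide and their union gives a word of weight 4.
-/

lemma ZMod.two_eq_zero_or_eq_one (a : ZMod 2) : a = 0 ∨ a = 1 := by decide +revert

lemma eight_dvd_two_pow {n : ℕ} (hn : 3 ≤ n) : (8 : ℤ) ∣ 2 ^ n := by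
  rw [show (8 : ℤ) = 2 ^ 3 by norm_num]
  exact pow_dvd_pow 2 hn

lemma Finset.disjoint_of_card_eq_two_of_sum_eq {M : Type*} [AddCancelCommMonoid M]
    [DecidableEq M] {S T : Finset M} (hS : #S = 2) (hT : #T = 2)
    (hsum : ∑ x ∈ S, x = ∑ x ∈ T, x) (hne : S ≠ T) : Disjoint S T := by
  rw [Finset.disjoint_left]
  intro a haS haT
  apply hne
  obtain ⟨b, hb⟩ := card_eq_one.mp (by rw [card_erase_of_mem haS, hS] : #(S.erase a) = 1)
  obtain ⟨c, hc⟩ := card_eq_one.mp (by rw [card_erase_of_mem haT, hT] : #(T.erase a) = 1)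
  rw [← sum_erase_add _ _ haS, ← sum_erase_add _ _ haT, hb, hc, sum_singleton, sum_singleton,
    add_left_inj] at hsum
  rw [← insert_erase haS, ← insert_erase haT, hb, hc, hsum]

section BinaryWeight

variable {ι : Type} [Fintype ι]

lemma wtH_eq_hammingNorm (v : ι → ZMod 2) : wtH v = hammingNorm v := rfl

lemma sum_eq_wtH (v : ι → ZMod 2) : ∑ i, v i = (wtH v : ZMod 2) := by
  have key : ∀ a : ZMod 2, a = if a ≠ 0 then 1 else 0 := by decide
  rw [Finset.sum_congr rfl fun i _ => key (v i), Finset.sum_boole, wtH]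

lemma sum_mul_eq_sum_filter (v w : ι → ZMod 2) :
    ∑ i, v i * w i = ∑ i ∈ univ.filter (v · ≠ 0), w i := by
  have key : ∀ a b : ZMod 2, a * b = if a ≠ 0 then b else 0 := by decide
  rw [Finset.sum_congr rfl fun i _ => key (v i) (w i), Finset.sum_filter]

lemma wtH_add_add_two_mul_wtH_mul (u v : ι → ZMod 2) :
    wtH (u + v) + 2 * wtH (u * v) = wtH u + wtH v := by
  have key : ∀ a b : ZMod 2, (if a + b ≠ 0 then 1 else 0) + 2 * (if a * b ≠ 0 then 1 else 0)
      = (if a ≠ 0 then 1 else 0) + (if b ≠ 0 then (1 : ℕ) else 0) := by decide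
  simp only [wtH, Finset.card_filter, Finset.mul_sum, ← Finset.sum_add_distrib]
  exact Finset.sum_congr rfl fun i _ => key (u i) (v i)

lemma subset_dualCode_of_four_dvd_wtH (C : Submodule (ZMod 2) (ι → ZMod 2))
    (hC : ∀ v ∈ C, 4 ∣ wtH v) :
    (C : Set (ι → ZMod 2)) ⊆ dualCode (C : Set (ι → ZMod 2)) := by
  intro u hu v hv
  have hsum := wtH_add_add_two_mul_wtH_mul u v
  have hu4 := hC u hu
  have hv4 := hC v hv
  have huv4 := hC (u + v) (C.add_mem hu hv)
  have h2 : 2 ∣ wtH (u * v) := by omega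
  rw [show ∑ i, u i * v i = ∑ i, (u * v) i from rfl, sum_eq_wtH,
    (ZMod.natCast_eq_zero_iff _ 2).mpr h2]

end BinaryWeight

section DualDimension

variable {ι K : Type} [Fintype ι] [Field K]

lemma dualCode_eq_orthogonal (C : Submodule K (ι → K)) :
    dualCode (C : Set (ι → K)) = LinearMap.BilinForm.orthogonal (dotProductBilin K K) C := by
  ext u
  simp only [LinearMap.BilinForm.mem_orthogonal_iff, dotProductBilin_apply_apply]
  refine forall₂_congr fun v _ => ?_
  rw [dotProduct_comm]
  rfl

lemma dotProductBilin_nondegenerate :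
    (dotProductBilin K K : LinearMap.BilinForm K (ι → K)).Nondegenerate := by
  refine ⟨fun u hu => ?_, fun u hu => ?_⟩
  · exact dotProduct_eq_zero_iff.mp hu
  · exact dotProduct_eq_zero_iff.mp fun w => by rw [dotProduct_comm]; exact hu w

lemma finrank_dualCode (C : Submodule K (ι → K)) :
    Module.finrank K (dualCode (C : Set (ι → K))) = Fintype.card ι - Module.finrank K C := by
  rw [dualCode_eq_orthogonal,
    LinearMap.BilinForm.finrank_orthogonal dotProductBilin_nondegenerate,
    Module.finrank_fintype_fun_eq_card]

end DualDimension

section SignSum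

variable {ι : Type} [Fintype ι]

def signSum (g : ι → ZMod 2) : ℤ := ∑ i, (-1) ^ (g i).val

lemma two_mul_wtH_eq_card_sub_signSum (g : ι → ZMod 2) :
    2 * (wtH g : ℤ) = Fintype.card ι - signSum g := by
  have hsign : ∀ a : ZMod 2, (-1 : ℤ) ^ a.val = 1 - 2 * if a ≠ 0 then 1 else 0 := by decide
  simp only [signSum, hsign, Finset.sum_sub_distrib, ← Finset.mul_sum, Finset.sum_boole, wtH,
    Finset.sum_const, Finset.card_univ, nsmul_eq_mul, mul_one]
  ring

lemma signSum_add_one (g : ι → ZMod 2) : signSum (g + 1) = -signSum g := by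
  have hflip : ∀ a : ZMod 2, (-1 : ℤ) ^ (a + 1).val = -(-1) ^ a.val := by decide
  simp only [signSum, Pi.add_apply, Pi.one_apply, hflip, Finset.sum_neg_distrib]

lemma signSum_const (c : ZMod 2) : signSum (fun _ : ι => c) = (-1) ^ c.val * Fintype.card ι := by
  simp [signSum, mul_comm]

end SignSum

section CharTwoField

variable {F : Type} [Field F] [Fintype F] [Algebra (ZMod 2) F]

lemma charP_two_of_algebra : CharP F 2 := charP_of_injective_algebraMap' (ZMod 2) 2

lemma eq_zero_of_forall_trace_mul_eq_zero {x : F}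
    (h : ∀ b : F, Algebra.trace (ZMod 2) F (b * x) = 0) : x = 0 :=
  (traceForm_nondegenerate (ZMod 2) F).2 x fun b => by
    simpa [Algebra.traceForm_apply] using h b

open Classical in
lemma signSum_trace_mul (b : F) :
    signSum (fun x => Algebra.trace (ZMod 2) F (b * x))
      = if b = 0 then (Fintype.card F : ℤ) else 0 := by
  split_ifs with hb
  · simp [hb, signSum]
  · obtain ⟨y, hy⟩ : ∃ y, Algebra.trace (ZMod 2) F (b * y) ≠ 0 := by
      by_contra! h
      exact hb (eq_zero_of_forall_trace_mul_eq_zero fun x => by rw [mul_comm]; exact h x)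
    -- translating by `y` flips every sign
    have hshift : signSum (fun x => Algebra.trace (ZMod 2) F (b * (x + y)))
        = signSum (fun x => Algebra.trace (ZMod 2) F (b * x)) :=
      Fintype.sum_equiv (Equiv.addRight y) _ _ fun _ => rfl
    have hy1 : Algebra.trace (ZMod 2) F (b * y) = 1 := Fin.eq_one_of_ne_zero _ hy
    simp only [mul_add, map_add, hy1] at hshift
    rw [show (fun x => Algebra.trace (ZMod 2) F (b * x) + 1)
        = (fun x => Algebra.trace (ZMod 2) F (b * x)) + 1 from rfl, signSum_add_one] at hshift
    linarith

end CharTwoField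

section Plateaued

variable {F : Type} [Field F] [Fintype F] [Algebra (ZMod 2) F] {m s : ℕ} {f : F → ZMod 2}

lemma walsh2_eq_signSum (f : F → ZMod 2) (β : F) :
    walsh2 F f β = signSum (fun x => f x + Algebra.trace (ZMod 2) F (β * x)) := rfl

lemma IsPlateaued2.eight_dvd_walsh2 (hpl : IsPlateaued2 m s F f) (hpar : Even (m + s))
    (hms : 6 ≤ m + s) (β : F) : (8 : ℤ) ∣ walsh2 F f β := by
  obtain ⟨h, hh⟩ := hpar
  rcases hpl β with h0 | h1
  · rw [pow_eq_zero_iff two_ne_zero] at h0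
    simp [h0]
  · have h8 := eight_dvd_two_pow (show 3 ≤ h by omega)
    rw [hh, pow_add, ← sq] at h1
    rcases sq_eq_sq_iff_eq_or_eq_neg.mp h1 with hw | hw <;> rw [hw]
    · exact h8
    · exact dvd_neg.mpr h8

lemma IsPlateaued2.walsh2_sq_lt (hpl : IsPlateaued2 m s F f) (hcard : Fintype.card F = 2 ^ m)
    (hsm : s < m) (β : F) : walsh2 F f β ^ 2 < (Fintype.card F : ℤ) ^ 2 := by
  rw [hcard]
  push_cast
  rw [← pow_mul]
  rcases hpl β with h | h <;> rw [h]
  · positivity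
  · exact pow_lt_pow_right₀ one_lt_two (by omega)

end Plateaued

section CodeCbar

variable {F : Type} [Field F] [Fintype F] [Algebra (ZMod 2) F] {m s : ℕ} {f : F → ZMod 2}

noncomputable def codeCbarMap (f : F → ZMod 2) :
    ZMod 2 × F × ZMod 2 →ₗ[ZMod 2] (F → ZMod 2) where
  toFun p x := p.1 * f x + Algebra.trace (ZMod 2) F (p.2.1 * x) + p.2.2
  map_add' p q := by
    funext x
    simp only [Prod.fst_add, Prod.snd_add, Pi.add_apply, add_mul, map_add]
    ring
  map_smul' r p := by
    funext x
    simp only [Prod.smul_fst, Prod.smul_snd, Pi.smul_apply, smul_eq_mul, RingHom.id_apply,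
      smul_mul_assoc, map_smul]
    ring

lemma range_codeCbarMap (f : F → ZMod 2) :
    (LinearMap.range (codeCbarMap f) : Set (F → ZMod 2)) = codeCbar 2 F f := by
  ext v
  constructor
  · rintro ⟨⟨a, b, c⟩, rfl⟩
    exact ⟨a, c, b, rfl⟩
  · rintro ⟨a, c, b, rfl⟩
    exact ⟨(a, b, c), rfl⟩

lemma codeCbarMap_injective (hpl : IsPlateaued2 m s F f) (hcard : Fintype.card F = 2 ^ m)
    (hsm : s < m) : Function.Injective (codeCbarMap f) := by
  rw [← LinearMap.ker_eq_bot, LinearMap.ker_eq_bot']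
  rintro ⟨a, b, c⟩ h
  have hx : ∀ x, a * f x + Algebra.trace (ZMod 2) F (b * x) + c = 0 := congr_fun h
  rcases a.two_eq_zero_or_eq_one with rfl | rfl
  · have hc : c = 0 := by simpa using hx 0
    subst hc
    have hb : b = 0 := eq_zero_of_forall_trace_mul_eq_zero fun y => by
      simpa [mul_comm] using hx y
    rw [hb]
    rfl
  · -- `f` would be affine, so its Walsh transform at `b` would be `±q`
    have hconst : (fun x => f x + Algebra.trace (ZMod 2) F (b * x)) = fun _ => c := by
      funext x
      simpa [CharTwo.add_eq_zero] using hx x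
    have hlt := hpl.walsh2_sq_lt hcard hsm b
    rw [walsh2_eq_signSum, hconst, signSum_const, mul_pow, ← pow_mul, pow_mul',
      neg_one_sq, one_pow, one_mul] at hlt
    exact absurd hlt (lt_irrefl _)

lemma finrank_eq_of_card_eq_two_pow (hcard : Fintype.card F = 2 ^ m) :
    Module.finrank (ZMod 2) F = m := by
  have h := Module.card_eq_pow_finrank (K := ZMod 2) (V := F)
  rw [ZMod.card, hcard] at h
  exact Nat.pow_right_injective le_rfl h.symm

lemma finrank_range_codeCbarMap (hpl : IsPlateaued2 m s F f) (hcard : Fintype.card F = 2 ^ m)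
    (hsm : s < m) : Module.finrank (ZMod 2) (LinearMap.range (codeCbarMap f)) = m + 2 := by
  rw [LinearMap.finrank_range_of_inj (codeCbarMap_injective hpl hcard hsm),
    Module.finrank_prod, Module.finrank_prod, Module.finrank_self,
    finrank_eq_of_card_eq_two_pow hcard]
  ring

lemma eight_dvd_signSum_of_mem_codeCbar (hpl : IsPlateaued2 m s F f)
    (hcard : Fintype.card F = 2 ^ m) (hm : 3 ≤ m) (hpar : Even (m + s)) (hms : 6 ≤ m + s)
    {v : F → ZMod 2} (hv : v ∈ codeCbar 2 F f) : (8 : ℤ) ∣ signSum v := by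
  obtain ⟨a, c, b, rfl⟩ := hv
  have hq : (8 : ℤ) ∣ Fintype.card F := by
    rw [hcard]
    exact_mod_cast eight_dvd_two_pow hm
  have hlin : (8 : ℤ) ∣ signSum (fun x => a * f x + Algebra.trace (ZMod 2) F (b * x)) := by
    rcases a.two_eq_zero_or_eq_one with rfl | rfl
    · classical
      simp only [zero_mul, zero_add, signSum_trace_mul]
      split_ifs
      exacts [hq, dvd_zero 8]
    · simpa only [one_mul, walsh2_eq_signSum] using hpl.eight_dvd_walsh2 hpar hms b
  rcases c.two_eq_zero_or_eq_one with rfl | rfl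
  · simpa only [add_zero] using hlin
  · rw [show (fun x => a * f x + Algebra.trace (ZMod 2) F (b * x) + 1)
        = (fun x => a * f x + Algebra.trace (ZMod 2) F (b * x)) + 1 from rfl, signSum_add_one]
    exact dvd_neg.mpr hlin

lemma four_dvd_wtH_of_mem_codeCbar (hpl : IsPlateaued2 m s F f)
    (hcard : Fintype.card F = 2 ^ m) (hm : 3 ≤ m) (hpar : Even (m + s)) (hms : 6 ≤ m + s)
    {v : F → ZMod 2} (hv : v ∈ codeCbar 2 F f) : 4 ∣ wtH v := by
  have hq := eight_dvd_two_pow hm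
  have h2 := two_mul_wtH_eq_card_sub_signSum v
  rw [hcard] at h2
  push_cast at h2
  have h8 := eight_dvd_signSum_of_mem_codeCbar hpl hcard hm hpar hms hv
  omega

end CodeCbar

lemma sum_codeword {F : Type} [Field F] [Algebra (ZMod 2) F] (f : F → ZMod 2) (T : Finset F)
    (a : ZMod 2) (b : F) (c : ZMod 2) :
    ∑ x ∈ T, (a * f x + Algebra.trace (ZMod 2) F (b * x) + c)
      = a * ∑ x ∈ T, f x + Algebra.trace (ZMod 2) F (b * ∑ x ∈ T, x) + #T * c := by
  simp [Finset.sum_add_distrib, Finset.mul_sum, map_sum]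

section DualCode

variable {F : Type} [Field F] [Fintype F] [Algebra (ZMod 2) F]

lemma mem_dualCode_codeCbar_iff (f : F → ZMod 2) (v : F → ZMod 2) :
    v ∈ dualCode (codeCbar 2 F f) ↔
      ∑ x ∈ univ.filter (v · ≠ 0), f x = 0 ∧ ∑ x ∈ univ.filter (v · ≠ 0), x = 0 ∧
        (#(univ.filter (v · ≠ 0)) : ZMod 2) = 0 := by
  set T := univ.filter (v · ≠ 0)
  have hdual : v ∈ dualCode (codeCbar 2 F f) ↔
      ∀ a b c, ∑ x ∈ T, (a * f x + Algebra.trace (ZMod 2) F (b * x) + c) = 0 := by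
    simp only [T, ← sum_mul_eq_sum_filter]
    constructor
    · exact fun h a b c => h _ ⟨a, c, b, rfl⟩
    · rintro h _ ⟨a, c, b, rfl⟩
      exact h a b c
  simp only [hdual, sum_codeword]
  constructor
  · intro h
    refine ⟨by simpa using h 1 0 0, ?_, by simpa using h 0 0 1⟩
    exact eq_zero_of_forall_trace_mul_eq_zero fun b => by simpa using h 0 b 0
  · rintro ⟨hf, hx, hT⟩ a b c
    simp [hf, hx, hT]

lemma four_le_wtH_of_mem_dualCode_codeCbar {f : F → ZMod 2} {v : F → ZMod 2}
    (hv : v ∈ dualCode (codeCbar 2 F f)) (hv0 : v ≠ 0) : 4 ≤ wtH v := by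
  classical
  have := charP_two_of_algebra (F := F)
  obtain ⟨-, hsum, hpar⟩ := (mem_dualCode_codeCbar_iff f v).mp hv
  have hne0 : wtH v ≠ 0 := by rwa [wtH_eq_hammingNorm, Ne, hammingNorm_eq_zero]
  have heven : Even (wtH v) := (ZMod.natCast_eq_zero_iff_even).mp hpar
  have hne2 : wtH v ≠ 2 := by
    intro h2
    obtain ⟨x, y, hxy, hT⟩ := card_eq_two.mp h2
    rw [hT, sum_pair hxy, CharTwo.add_eq_zero] at hsum
    exact hxy hsum
  obtain ⟨k, hk⟩ := heven
  omega

lemma exists_card_eq_four_sum_eq_zero (f : F → ZMod 2) (hF : 4 < Fintype.card F) :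
    ∃ U : Finset F, #U = 4 ∧ ∑ x ∈ U, x = 0 ∧ ∑ x ∈ U, f x = 0 := by
  classical
  have := charP_two_of_algebra (F := F)
  -- pigeonhole: there are more pairs `{x, y}` than values `(x + y, f x + f y) ∈ F* × F₂`
  let key : Finset F → F × ZMod 2 := fun T => (∑ x ∈ T, x, ∑ x ∈ T, f x)
  have hmaps : ∀ T ∈ powersetCard 2 (univ : Finset F), key T ∈ (univ.erase 0) ×ˢ univ := by
    intro T hT
    obtain ⟨x, y, hxy, rfl⟩ := card_eq_two.mp (mem_powersetCard_univ.mp hT)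
    simp only [key, mem_product, mem_erase, mem_univ, and_true, sum_pair hxy]
    rwa [Ne, CharTwo.add_eq_zero]
  have hlt : #((univ.erase (0 : F)) ×ˢ (univ : Finset (ZMod 2)))
      < #(powersetCard 2 (univ : Finset F)) := by
    rw [card_product, card_erase_of_mem (mem_univ _), card_powersetCard, card_univ, card_univ,
      ZMod.card, Nat.choose_two_right]
    refine (Nat.le_div_iff_mul_le two_pos).mpr ?_
    obtain ⟨n, hn⟩ : ∃ n, Fintype.card F = n + 5 := ⟨_, (Nat.sub_add_cancel hF).symm⟩
    rw [hn, show n + 5 - 1 = n + 4 by omega]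
    nlinarith
  obtain ⟨S, hS, T, hT, hne, hkey⟩ := exists_ne_map_eq_of_card_lt_of_maps_to hlt hmaps
  rw [mem_powersetCard_univ] at hS hT
  have hx : ∑ x ∈ S, x = ∑ x ∈ T, x := congrArg Prod.fst hkey
  have hf : ∑ x ∈ S, f x = ∑ x ∈ T, f x := congrArg Prod.snd hkey
  have hdisj := disjoint_of_card_eq_two_of_sum_eq hS hT hx hne
  refine ⟨S ∪ T, ?_, ?_, ?_⟩
  · rw [card_union_of_disjoint hdisj, hS, hT]
  · rw [sum_union hdisj, hx, CharTwo.add_self_eq_zero]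
  · rw [sum_union hdisj, hf, CharTwo.add_self_eq_zero]

lemma exists_wtH_eq_four_mem_dualCode_codeCbar (f : F → ZMod 2) (hF : 4 < Fintype.card F) :
    ∃ v ∈ dualCode (codeCbar 2 F f), v ≠ 0 ∧ wtH v = 4 := by
  classical
  obtain ⟨U, hU4, hUx, hUf⟩ := exists_card_eq_four_sum_eq_zero f hF
  set v : F → ZMod 2 := fun x => if x ∈ U then 1 else 0
  have hsupp : univ.filter (v · ≠ 0) = U := by
    ext x
    simp [v]
  have hwt : wtH v = 4 := by rw [wtH, hsupp, hU4]
  refine ⟨v, (mem_dualCode_codeCbar_iff f v).mpr ?_, fun h0 => ?_, hwt⟩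
  · rw [hsupp, hU4]
    exact ⟨hUf, hUx, by decide⟩
  · rw [h0, wtH_eq_hammingNorm, hammingNorm_zero] at hwt
    exact absurd hwt (by norm_num)

end DualCode

theorem statement13_general (m s : ℕ) (hs : s ≤ m - 2) (hpar : Even (m + s)) (hms : 6 ≤ m + s)
    (F : Type) [Field F] [Fintype F] [Algebra (ZMod 2) F]
    (hcard : Fintype.card F = 2 ^ m)
    (f : F → ZMod 2) (hpl : IsPlateaued2 m s F f) :
    codeCbar 2 F f ⊆ (dualCode (codeCbar 2 F f) : Set (F → ZMod 2)) ∧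
    Module.finrank (ZMod 2) (dualCode (codeCbar 2 F f)) = 2 ^ m - m - 2 ∧
    hasMinDist (dualCode (codeCbar 2 F f) : Set (F → ZMod 2)) 4 := by
  have hm : 4 ≤ m := by omega
  have hF : 4 < Fintype.card F := by
    rw [hcard]
    calc 4 < 2 ^ 4 := by norm_num
      _ ≤ 2 ^ m := Nat.pow_le_pow_right two_pos hm
  refine ⟨?_, ?_, ?_⟩
  · rw [← range_codeCbarMap f]
    refine subset_dualCode_of_four_dvd_wtH _ fun v hv => ?_
    rw [← SetLike.mem_coe, range_codeCbarMap] at hv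
    exact four_dvd_wtH_of_mem_codeCbar hpl hcard (by omega) hpar hms hv
  · rw [← range_codeCbarMap f, finrank_dualCode, finrank_range_codeCbarMap hpl hcard (by omega),
      hcard]
    omega
  · obtain ⟨v, hv, hv0, hv4⟩ := exists_wtH_eq_four_mem_dualCode_codeCbar f hF
    exact ⟨⟨v, hv, hv0, hv4⟩, fun v hv hv0 => four_le_wtH_of_mem_dualCode_codeCbar hv hv0⟩

theorem statement13 (m s : ℕ) (hs : s ≤ m - 2) (hpar : Even (m + s)) (hms : 6 ≤ m + s)
    (F : Type) [Field F] [Fintype F] [Algebra (ZMod 2) F]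
    (hcard : Fintype.card F = 2 ^ m)
    (f : F → ZMod 2) (hf0 : f 0 = 0) (hpl : IsPlateaued2 m s F f) :
    codeCbar 2 F f ⊆ (dualCode (codeCbar 2 F f) : Set (F → ZMod 2)) ∧
    Module.finrank (ZMod 2) (dualCode (codeCbar 2 F f)) = 2 ^ m - m - 2 ∧
    hasMinDist (dualCode (codeCbar 2 F f) : Set (F → ZMod 2)) 4 :=
  statement13_general m s hs hpar hms F hcard f hpl
end

section
/- Let m be an integer and let s be an integer with 0 ≤ s ≤ m−2 such that m+s is even and m+s ≥ 6, and let f : F_q → F_2 (q = 2^m) be an s-plateaued Boolean function with f(0) = 0 which is unbalanced. If W_f(0) = −2^{(m+s)/2}, then the minimum distance of the extended binary code C̄_f' equals 2^{m−1} − 2^{(m+s−2)/2} + 1; if W_f(0) = 2^{(m+s)/2}, then the minimum distance of C̄_f' equals 2^{m−1} − 2^{(m+s−2)/2} + 2. -/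
open Finset

/-! Write `b = ∑ aᵢ αⁱ`. Since `y + e ≠ 0 ↔ y ≠ e` in `F₂`, the tail of a codeword is nonzero exactly
where `a f(x) + Tr(b x) ≠ a + c`, and counting such `x` with characters gives
`2 · wt = 2([c ≠ 0] + [a ≠ 0] + wt(aᵢ)) + 2^m ∓ W_{af}(b)`.
For `a = 0` the Walsh value vanishes unless `b = 0`, i.e. (as `1, α, …, α^{m-1}` is a basis) unless all
`aᵢ = 0`. For `a = 1` plateauedness gives `|W_f(b)| ≤ 2^{(m+s)/2}`, and the bound is attained
at `b = 0`, where the sign of `W_f(0)` decides whether `c = 0` or `c = 1` gives the lighter word. -/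

section HammingWeight

variable {K : Type} [Zero K] [DecidableEq K]

lemma wtH_sum_elim {A B : Type} [Fintype A] [Fintype B] (u : A → K) (w : B → K) :
    wtH (Sum.elim u w) = wtH u + wtH w := by
  simp only [wtH, Finset.card_filter, Fintype.sum_sum_type]
  rfl

lemma wtH_cons {n : ℕ} (x : K) (v : Fin n → K) :
    wtH (Fin.cons x v : Fin (n + 1) → K) = (if x ≠ 0 then 1 else 0) + wtH v := by
  simp only [wtH, Finset.card_filter, Fin.sum_univ_succ, Fin.cons_zero, Fin.cons_succ]

lemma wtH_eq_zero_iff {n : Type} [Fintype n] (v : n → K) : wtH v = 0 ↔ v = 0 := by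
  simp [wtH, Finset.filter_eq_empty_iff, funext_iff]

lemma one_le_wtH {n : Type} [Fintype n] {v : n → K} (hv : v ≠ 0) : 1 ≤ wtH v :=
  Nat.one_le_iff_ne_zero.mpr (mt (wtH_eq_zero_iff v).mp hv)

@[simp]
lemma wtH_zero {n : Type} [Fintype n] : wtH (0 : n → K) = 0 :=
  (wtH_eq_zero_iff _).mpr rfl

end HammingWeight

section Walsh

variable {F : Type} [Field F] [Fintype F] [Algebra (ZMod 2) F]

lemma walsh2_zero_of_ne_zero {b : F} (hb : b ≠ 0) : walsh2 F 0 b = 0 := by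
  obtain ⟨z, hz⟩ := Algebra.trace_surjective (ZMod 2) F 1
  have hflip : ∀ u : ZMod 2, (-1 : ℤ) ^ (u + 1).val = -(-1) ^ u.val := by decide
  have hneg : walsh2 F 0 b = -walsh2 F 0 b := by
    calc walsh2 F 0 b
        = ∑ x, (-1 : ℤ) ^ ((0 : F → ZMod 2) x + Algebra.trace (ZMod 2) F (b * (x + b⁻¹ * z))).val :=
          (Equiv.sum_comp (Equiv.addRight (b⁻¹ * z)) _).symm
      _ = -walsh2 F 0 b := by
          simp [walsh2, mul_add, hb, hz, hflip, Finset.sum_neg_distrib]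
  linarith

lemma walsh2_zero_zero : walsh2 F 0 0 = Fintype.card F := by
  simp [walsh2]

lemma two_mul_card_add_trace_ne (g : F → ZMod 2) (b : F) (e : ZMod 2) :
    2 * (#{x | g x + Algebra.trace (ZMod 2) F (b * x) ≠ e} : ℤ)
      = Fintype.card F - (-1) ^ e.val * walsh2 F g b := by
  have hsign : ∀ y e : ZMod 2,
      (-1 : ℤ) ^ e.val * (-1) ^ y.val = 1 - 2 * if y ≠ e then 1 else 0 := by decide
  rw [walsh2, Finset.mul_sum]
  simp_rw [hsign]
  rw [Finset.sum_sub_distrib, ← Finset.mul_sum, Finset.sum_boole]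
  simp

lemma abs_walsh2_le_card (g : F → ZMod 2) (b : F) : |walsh2 F g b| ≤ Fintype.card F := by
  refine (Finset.abs_sum_le_sum_abs _ _).trans ?_
  simp

lemma abs_walsh2_le {m s k : ℕ} {f : F → ZMod 2} (hpl : IsPlateaued2 m s F f)
    (hk : m + s = 2 * k) (b : F) : |walsh2 F f b| ≤ 2 ^ k := by
  have hsq : walsh2 F f b ^ 2 ≤ (2 ^ k) ^ 2 := by
    rcases hpl b with h | h <;> rw [h]
    · positivity
    · rw [← pow_mul, hk, mul_comm]
  simpa using sq_le_sq.mp hsq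

end Walsh

lemma linearIndependent_pow_of_forall_eq_pow {K F : Type} [Field K] [Field F] [Algebra K F]
    [FiniteDimensional K F] {α : F} (hα : ∀ x : F, x ≠ 0 → ∃ k : ℕ, x = α ^ k) :
    LinearIndependent K (fun i : Fin (Module.finrank K F) => α ^ (i : ℕ)) := by
  have htop : IntermediateField.adjoin K {α} = ⊤ := by
    rw [eq_top_iff]
    intro x _
    rcases eq_or_ne x 0 with rfl | hx
    · exact zero_mem _
    · obtain ⟨j, rfl⟩ := hα x hx
      exact pow_mem (IntermediateField.mem_adjoin_simple_self K α) j
  have hdeg : (minpoly K α).natDegree = Module.finrank K F := by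
    rw [← IntermediateField.adjoin.finrank (IsIntegral.of_finite K α), htop,
      IntermediateField.finrank_top']
  exact hdeg ▸ linearIndependent_pow α

section ExtendedCode

variable {F : Type} [Field F] [Algebra (ZMod 2) F] {m : ℕ}

noncomputable def extCodeword (m : ℕ) (f : F → ZMod 2) (α : F) (c a : ZMod 2) (aa : Fin m → ZMod 2) :
    Fin (m + 2) ⊕ F → ZMod 2 :=
  Sum.elim (Fin.cons c (Fin.cons a aa))
    (fun x => a * f x + Algebra.trace (ZMod 2) F ((∑ i : Fin m, aa i • α ^ (i : ℕ)) * x) + a + c)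

lemma extCodeword_ne_zero (f : F → ZMod 2) (α : F) (c : ZMod 2) (aa : Fin m → ZMod 2) :
    extCodeword m f α c 1 aa ≠ 0 := fun h => by
  simpa [extCodeword] using congr_fun h (Sum.inl 1)

variable [Fintype F]

lemma mem_extCode {f : F → ZMod 2} {α : F} {v : Fin (m + 2) ⊕ F → ZMod 2} :
    v ∈ extCode 2 m F f α ↔ ∃ c a aa, v = extCodeword m f α c a aa :=
  Iff.rfl

lemma two_mul_wtH_extCodeword (f : F → ZMod 2) (α : F) (c a : ZMod 2) (aa : Fin m → ZMod 2) :
    2 * (wtH (extCodeword m f α c a aa) : ℤ) =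
      2 * ((if c ≠ 0 then 1 else 0) + (if a ≠ 0 then 1 else 0) + wtH aa) + Fintype.card F
        - (-1) ^ (a + c).val * walsh2 F (a • f) (∑ i : Fin m, aa i • α ^ (i : ℕ)) := by
  have htail : ∀ y a c : ZMod 2, y + a + c ≠ 0 ↔ y ≠ a + c := by decide
  rw [extCodeword, wtH_sum_elim, wtH_cons, wtH_cons, add_sub_assoc, ← two_mul_card_add_trace_ne]
  simp only [wtH, htail, Pi.smul_apply, smul_eq_mul]
  push_cast
  ring

lemma two_mul_wtH_extCodeword_ge {f : F → ZMod 2} {α : F} {K : ℤ}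
    (hW : ∀ b, |walsh2 F f b| ≤ K)
    (hα : LinearIndependent (ZMod 2) (fun i : Fin m => α ^ (i : ℕ)))
    {c a : ZMod 2} {aa : Fin m → ZMod 2} (hv : extCodeword m f α c a aa ≠ 0) :
    Fintype.card F - K + 2 ≤ 2 * (wtH (extCodeword m f α c a aa) : ℤ) ∧
      (walsh2 F f 0 = K → 2 ≤ K →
        Fintype.card F - K + 4 ≤ 2 * (wtH (extCodeword m f α c a aa) : ℤ)) := by
  have hbits : ∀ x : ZMod 2, x = 0 ∨ x = 1 := by decide
  have hval1 : (1 : ZMod 2).val = 1 := rfl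
  have h11 : (1 : ZMod 2) + 1 = 0 := rfl
  have hK : 0 ≤ K := (abs_nonneg _).trans (hW 0)
  have hwt := two_mul_wtH_extCodeword f α c a aa
  have hpos := one_le_wtH hv -- rules out the zero word `c = a = 0`, `aa = 0`
  obtain ⟨hWlo, hWhi⟩ := abs_le.mp (hW (∑ i : Fin m, aa i • α ^ (i : ℕ)))
  obtain rfl | ⟨hwaa, hb⟩ : aa = 0 ∨ 1 ≤ wtH aa ∧ ∑ i : Fin m, aa i • α ^ (i : ℕ) ≠ 0 := by
    refine or_iff_not_imp_left.mpr fun haa => ⟨one_le_wtH haa, fun h => haa ?_⟩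
    exact funext (Fintype.linearIndependent_iff.mp hα aa h)
  · rcases hbits a with rfl | rfl <;> rcases hbits c with rfl | rfl <;>
      simp [h11, hval1, walsh2_zero_zero] at hwt hWlo hWhi <;> omega
  · rcases hbits a with rfl | rfl <;> rcases hbits c with rfl | rfl <;>
      simp [h11, hval1, walsh2_zero_of_ne_zero hb] at hwt <;> omega

lemma hasMinDist_extCode_of_walsh2_zero_eq_neg {f : F → ZMod 2} {α : F} {q t : ℕ}
    (hcard : Fintype.card F = 2 * q) (hW : ∀ b, |walsh2 F f b| ≤ 2 * t)
    (hα : LinearIndependent (ZMod 2) (fun i : Fin m => α ^ (i : ℕ)))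
    (hW0 : walsh2 F f 0 = -(2 * t)) :
    hasMinDist (extCode 2 m F f α) (q - t + 1) := by
  have htq := (abs_le.mp (abs_walsh2_le_card f 0)).1
  have hwt := two_mul_wtH_extCodeword f α 0 1 (0 : Fin m → ZMod 2)
  simp [hW0, hcard, ZMod.val_one] at hwt htq
  refine ⟨⟨_, mem_extCode.mpr ⟨0, 1, 0, rfl⟩, extCodeword_ne_zero f α 0 0, by omega⟩, ?_⟩
  intro v hvS hv
  obtain ⟨c, a, aa, rfl⟩ := mem_extCode.mp hvS
  have hlow := (two_mul_wtH_extCodeword_ge hW hα hv).1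
  rw [hcard] at hlow
  omega

lemma hasMinDist_extCode_of_walsh2_zero_eq_pos {f : F → ZMod 2} {α : F} {q t : ℕ}
    (hcard : Fintype.card F = 2 * q) (hW : ∀ b, |walsh2 F f b| ≤ 2 * t) (ht : t ≠ 0)
    (hα : LinearIndependent (ZMod 2) (fun i : Fin m => α ^ (i : ℕ)))
    (hW0 : walsh2 F f 0 = 2 * t) :
    hasMinDist (extCode 2 m F f α) (q - t + 2) := by
  have htq := (abs_le.mp (abs_walsh2_le_card f 0)).2
  have hwt := two_mul_wtH_extCodeword f α 1 1 (0 : Fin m → ZMod 2)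
  simp [hW0, hcard, show (1 + 1 : ZMod 2) = 0 from rfl] at hwt htq
  refine ⟨⟨_, mem_extCode.mpr ⟨1, 1, 0, rfl⟩, extCodeword_ne_zero f α 1 0, by omega⟩, ?_⟩
  intro v hvS hv
  obtain ⟨c, a, aa, rfl⟩ := mem_extCode.mp hvS
  have hlow := (two_mul_wtH_extCodeword_ge hW hα hv).2 hW0 (by omega)
  rw [hcard] at hlow
  omega

end ExtendedCode

theorem statement15_general (m s : ℕ) (hpar : Even (m + s))
    (F : Type) [Field F] [Fintype F] [Algebra (ZMod 2) F]
    (hcard : Fintype.card F = 2 ^ m)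
    (α : F) (hα : ∀ x : F, x ≠ 0 → ∃ k : ℕ, x = α ^ k)
    (f : F → ZMod 2) (hpl : IsPlateaued2 m s F f) :
    (walsh2 F f 0 = -2 ^ ((m + s) / 2) → hasMinDist (extCode 2 m F f α)
      (2 ^ (m - 1) - 2 ^ ((m + s - 2) / 2) + 1)) ∧
    (walsh2 F f 0 = 2 ^ ((m + s) / 2) → hasMinDist (extCode 2 m F f α)
      (2 ^ (m - 1) - 2 ^ ((m + s - 2) / 2) + 2)) := by
  obtain ⟨k, hk⟩ : ∃ k, m + s = 2 * k := ⟨(m + s) / 2, by obtain ⟨r, hr⟩ := hpar; omega⟩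
  have hm : m ≠ 0 := by
    rintro rfl
    exact (Fintype.one_lt_card (α := F)).ne' (by simpa using hcard)
  have hfr : Module.finrank (ZMod 2) F = m := by
    rw [Module.card_eq_pow_finrank (K := ZMod 2), ZMod.card] at hcard
    exact Nat.pow_right_injective le_rfl hcard
  have hind := hfr ▸ linearIndependent_pow_of_forall_eq_pow (K := ZMod 2) hα
  have hcard' : Fintype.card F = 2 * 2 ^ (m - 1) := by
    rw [hcard, ← pow_succ', Nat.sub_add_cancel (by omega)]
  have h2k : (2 : ℤ) ^ k = 2 * (2 ^ (k - 1) : ℕ) := by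
    push_cast
    rw [← pow_succ', Nat.sub_add_cancel (by omega)]
  have hW (b : F) : |walsh2 F f b| ≤ 2 * (2 ^ (k - 1) : ℕ) := h2k ▸ abs_walsh2_le hpl hk b
  rw [show (m + s) / 2 = k by omega, show (m + s - 2) / 2 = k - 1 by omega, h2k]
  exact ⟨hasMinDist_extCode_of_walsh2_zero_eq_neg hcard' hW hind,
    hasMinDist_extCode_of_walsh2_zero_eq_pos hcard' hW (by positivity) hind⟩

theorem statement15 (m s : ℕ) (hs : s ≤ m - 2) (hpar : Even (m + s)) (hms : 6 ≤ m + s)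
    (F : Type) [Field F] [Fintype F] [Algebra (ZMod 2) F]
    (hcard : Fintype.card F = 2 ^ m)
    (α : F) (hα : ∀ x : F, x ≠ 0 → ∃ k : ℕ, x = α ^ k)
    (f : F → ZMod 2) (hf0 : f 0 = 0) (hpl : IsPlateaued2 m s F f)
    (hub : walsh2 F f 0 ≠ 0) :
    (walsh2 F f 0 = -2 ^ ((m + s) / 2) → hasMinDist (extCode 2 m F f α)
      (2 ^ (m - 1) - 2 ^ ((m + s - 2) / 2) + 1)) ∧
    (walsh2 F f 0 = 2 ^ ((m + s) / 2) → hasMinDist (extCode 2 m F f α)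
      (2 ^ (m - 1) - 2 ^ ((m + s - 2) / 2) + 2)) :=
  statement15_general m s hpar F hcard α hα f hpl
end
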